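/- arXiv:0912.1824 — 8 statements merged into one kernel-verified Lean document; each statement's English description precedes it below -/
import Mathlib

section
/- Let m be an even positive integer and θ = π − π/(2m). Let A^e be the m×m real matrix whose entry in row i (i = 1, …, m) and column 2k+1 is cos((2i−1)(2k+1)θ) and in row i and column 2k+2 is sin((2i−1)(2k+1)θ), for k = 0, …, m/2 − 1. Then A^e (A^e)^T = (m/2) I_m; in particular A^e is invertible, so for every right-hand side v ∈ ℝ^m the linear system A^e x = v has a unique solution. -/
/-!
Pairing the columns `2k` and `2k+1` turns each entry of `A Aᵀ` into
`∑ₖ cos ((η_i - η_{i'}) (2k+1))`. Since `θ = π - π/(2m)`, modulo `2π` the summand is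
`cos ((i - i') (2k+1) π / m)`, and these are exactly the sums over the Chebyshev nodes that vanish
for `0 < |i - i'| < m` (`Polynomial.Chebyshev.sumZeroes_T_of_not_dvd`). Hence `(2/m) Aᵀ` is a right
inverse of `A`.
-/

open Real Finset Polynomial.Chebyshev
open scoped Matrix

theorem Finset.sum_range_two_mul {M : Type*} [AddCommMonoid M] (f : ℕ → M) (n : ℕ) :
    ∑ j ∈ range (2 * n), f j = ∑ k ∈ range n, (f (2 * k) + f (2 * k + 1)) := by
  induction n with
  | zero => simp
  | succ n ih =>
    rw [show 2 * (n + 1) = 2 * n + 1 + 1 by ring, sum_range_succ, sum_range_succ, ih,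
      sum_range_succ, add_assoc]

theorem sum_range_cos_int_mul_odd_div_eq_zero {n : ℕ} {e : ℤ} (he : ¬ (2 * n : ℤ) ∣ e) :
    ∑ k ∈ range n, cos (e * ((2 * k + 1) / (2 * n) * π)) = 0 := by
  rcases eq_or_ne n 0 with rfl | hn
  · simp
  have h := sumZeroes_T_of_not_dvd he
  simp only [sumZeroes, T_real_cos] at h
  exact (mul_eq_zero.mp h).resolve_left (by positivity)

theorem Matrix.existsUnique_mulVec_eq_of_mul_transpose_eq_smul_one {ι K : Type*} [Fintype ι]
    [DecidableEq ι] [Field K] {A : Matrix ι ι K} {c : K} (hc : c ≠ 0)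
    (h : A * Aᵀ = c • 1) (v : ι → K) : ∃! x, A *ᵥ x = v := by
  have hinv : A * (c⁻¹ • Aᵀ) = 1 := by
    rw [Matrix.mul_smul, h, smul_smul, inv_mul_cancel₀ hc, one_smul]
  have hunit : IsUnit A := A.isUnit_iff_isUnit_det.mpr (isUnit_det_of_right_inverse hinv)
  exact Function.Bijective.existsUnique
    ⟨mulVec_injective_iff_isUnit.mpr hunit, mulVec_surjective_iff_isUnit.mpr hunit⟩ v

theorem mul_transpose_apply_eq_sum_cos_sub {n : ℕ} {θ : ℝ}
    {A : Matrix (Fin (2 * n)) (Fin (2 * n)) ℝ}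
    (hA : ∀ i j : Fin (2 * n), A i j =
      if j.val % 2 = 0
      then cos ((2 * (i.val : ℝ) + 1) * ((j.val : ℝ) + 1) * θ)
      else sin ((2 * (i.val : ℝ) + 1) * (j.val : ℝ) * θ)) (i i' : Fin (2 * n)) :
    (A * Aᵀ) i i' = ∑ k ∈ range n,
      cos ((2 * (i.val : ℝ) + 1) * (2 * k + 1) * θ
        - (2 * (i'.val : ℝ) + 1) * (2 * k + 1) * θ) := by
  rw [Matrix.mul_apply, sum_fin_eq_sum_range, sum_range_two_mul]
  refine sum_congr rfl fun k hk => ?_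
  have hk : 2 * k + 1 < 2 * n := by rw [mem_range] at hk; omega
  simp [hk, Nat.lt_of_succ_lt hk, hA, cos_sub]

theorem cos_odd_mul_sub_odd_mul_eq_cos_int_mul {n : ℕ} (hn : n ≠ 0) {θ : ℝ}
    (hθ : θ = π - π / (2 * (2 * n))) (a b k : ℕ) :
    cos ((2 * a + 1) * (2 * k + 1) * θ - (2 * b + 1) * (2 * k + 1) * θ)
      = cos ((((a : ℤ) - b : ℤ) : ℝ) * ((2 * k + 1) / (2 * n) * π)) := by
  rw [← cos_int_mul_two_pi_sub _ ((a - b) * (2 * k + 1))]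
  congr 1
  subst hθ
  push_cast
  field_simp
  ring

/-- Even-`m` part of Lemma 1: the matrix `A^e` with rows
`(cos(η_i), sin(η_i), cos(3η_i), sin(3η_i), …, cos((m−1)η_i), sin((m−1)η_i))`,
`η_i = (2i−1)θ`, `θ = π − π/(2m)`, satisfies `A^e (A^e)^T = (m/2) I`; in particular
every linear system `A^e x = v` has a unique solution. -/
theorem stmt_2 (m : ℕ) (hm : Even m) (hm0 : 0 < m)
    (θ : ℝ) (hθ : θ = Real.pi - Real.pi / (2 * m))
    (A : Matrix (Fin m) (Fin m) ℝ)
    (hA : ∀ i j : Fin m, A i j =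
      if j.val % 2 = 0
      then Real.cos ((2 * (i.val : ℝ) + 1) * ((j.val : ℝ) + 1) * θ)
      else Real.sin ((2 * (i.val : ℝ) + 1) * (j.val : ℝ) * θ)) :
    A * A.transpose = ((m : ℝ) / 2) • (1 : Matrix (Fin m) (Fin m) ℝ) ∧
      ∀ v : Fin m → ℝ, ∃! x : Fin m → ℝ, A.mulVec x = v := by
  obtain ⟨n, rfl⟩ := hm.two_dvd
  have hn : n ≠ 0 := by omega
  push_cast at hθ
  have hgram : A * Aᵀ = (((2 * n : ℕ) : ℝ) / 2) • 1 := by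
    ext i i'
    simp only [mul_transpose_apply_eq_sum_cos_sub hA,
      cos_odd_mul_sub_odd_mul_eq_cos_int_mul hn hθ, Matrix.smul_apply, Matrix.one_apply]
    split_ifs with hii
    · simp [hii]
    · have hdvd : ¬ (2 * n : ℤ) ∣ i - i' := fun h => hii <| Fin.ext <| by
        have := Int.eq_zero_of_abs_lt_dvd h (by rw [abs_lt]; omega)
        omega
      rw [sum_range_cos_int_mul_odd_div_eq_zero hdvd, smul_zero]
  exact ⟨hgram, Matrix.existsUnique_mulVec_eq_of_mul_transpose_eq_smul_one (by positivity) hgram⟩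
end

section
/- Let m be an even positive integer, and for k = 0, …, m/2 − 1 set μ_k = cos((1+2k)π/(2m)) > 0 and ω_k = sin((1+2k)π/(2m)) > 0. Let c_k, d_k be real numbers and define L : [0, ∞) → ℝ by L(t) = Σ_{k=0}^{m/2−1} e^{−μ_k t} [c_k cos(ω_k t) + d_k sin(ω_k t)]. Assume the (one-sided) derivatives at 0 satisfy L^{(j)}(0) = 0 for every odd j with 1 ≤ j ≤ 2m−3, and L^{(2m−1)}(0) = 1/2. Then ∫_{−∞}^{∞} L(|τ|) dτ = 1 and ∫_{−∞}^{∞} τ^k L(|τ|) dτ = 0 for every k = 1, …, 2m−1; that is, t ↦ L(|t|) is a kernel of order 2m. -/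
/-!
Write `L t = Re (∑ k, a k * exp (w k * t))` with `a k = c k - d k * I` and `w k = -μ k + ω k * I`.
Then `L⁽ʲ⁾(0) = Re (∑ k, a k * w k ^ j)`, while `∫₀^∞ t ^ p * exp (w t) dt = p! / (-w) ^ (p + 1)`.
Every `w k` is a `2m`-th root of `-1`, so `((-w k) ^ (p + 1))⁻¹ = (-1) ^ p * w k ^ (2m - 1 - p)`,
and hence `∫₀^∞ t ^ p * L t dt = (-1) ^ p * p! * L⁽²ᵐ⁻¹⁻ᵖ⁾(0)` for `p < 2m`: the moment conditions
on `L (|τ|)` become exactly the conditions on the odd derivatives of `L` at `0`. The odd moments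
of the even function `τ ↦ L |τ|` vanish by symmetry.
-/

open MeasureTheory Set Filter Topology Complex Finset Nat

lemma hasDerivAt_cexp_mul_ofReal (w : ℂ) (t : ℝ) :
    HasDerivAt (fun s : ℝ => cexp (w * s)) (w * cexp (w * t)) t := by
  simpa [mul_comm] using (((hasDerivAt_id t).ofReal_comp).const_mul w).cexp

lemma norm_pow_mul_cexp (w : ℂ) (n : ℕ) (t : ℝ) :
    ‖(t : ℂ) ^ n * cexp (w * t)‖ = |t| ^ n * Real.exp (w.re * t) := by
  simp [norm_exp]

section
variable {w : ℂ}

lemma tendsto_pow_mul_cexp_atTop (hw : w.re < 0) (n : ℕ) :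
    Tendsto (fun t : ℝ => (t : ℂ) ^ n * cexp (w * t)) atTop (𝓝 0) := by
  rw [tendsto_zero_iff_norm_tendsto_zero]
  refine (tendsto_rpow_mul_exp_neg_mul_atTop_nhds_zero n (-w.re) (by linarith)).congr' ?_
  filter_upwards [Ioi_mem_atTop 0] with t ht
  rw [norm_pow_mul_cexp, Real.rpow_natCast, abs_of_pos ht, neg_neg]

lemma integrableOn_pow_mul_cexp (hw : w.re < 0) (n : ℕ) :
    IntegrableOn (fun t : ℝ => (t : ℂ) ^ n * cexp (w * t)) (Ioi (0 : ℝ)) := by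
  have hbound := integrableOn_rpow_mul_exp_neg_mul_rpow (s := n) (p := 1) (b := -w.re)
    (by linarith [n.cast_nonneg (α := ℝ)]) one_pos (by linarith)
  refine hbound.mono' (by fun_prop) ?_
  filter_upwards [ae_restrict_mem measurableSet_Ioi] with t ht
  rw [norm_pow_mul_cexp, Real.rpow_natCast, Real.rpow_one, abs_of_pos ht, neg_neg]

lemma integral_Ioi_pow_mul_cexp (hw : w.re < 0) (n : ℕ) :
    ∫ t in Ioi (0 : ℝ), (t : ℂ) ^ n * cexp (w * t) = n ! / (-w) ^ (n + 1) := by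
  have hw0 : w ≠ 0 := by rintro rfl; simp at hw
  induction n with
  | zero => simpa [neg_div, div_neg] using integral_exp_mul_complex_Ioi hw 0
  | succ n ih =>
    -- FTC for `t ^ (n + 1) * exp (w t)`, which vanishes at `0` and at `∞`,
    -- gives `(n + 1) * Iₙ + w * Iₙ₊₁ = 0`
    have hderiv : ∀ t ∈ Ici (0 : ℝ), HasDerivAt (fun s : ℝ => (s : ℂ) ^ (n + 1) * cexp (w * s))
        ((n + 1) * ((t : ℂ) ^ n * cexp (w * t)) + w * ((t : ℂ) ^ (n + 1) * cexp (w * t))) t := by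
      intro t _
      refine (((hasDerivAt_pow (n + 1) (t : ℂ)).comp_ofReal).fun_mul
        (hasDerivAt_cexp_mul_ofReal w t)).congr_deriv ?_
      rw [Nat.add_sub_cancel]
      push_cast
      ring
    have hint := ((integrableOn_pow_mul_cexp hw n).const_mul ((n : ℂ) + 1)).add
      ((integrableOn_pow_mul_cexp hw (n + 1)).const_mul w)
    have hftc := integral_Ioi_of_hasDerivAt_of_tendsto' hderiv hint
      (tendsto_pow_mul_cexp_atTop hw (n + 1))
    rw [integral_add ((integrableOn_pow_mul_cexp hw n).const_mul _)
      ((integrableOn_pow_mul_cexp hw (n + 1)).const_mul _), integral_const_mul,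
      integral_const_mul, ih] at hftc
    simp only [ofReal_zero, ne_eq, add_eq_zero, one_ne_zero, and_false, not_false_eq_true,
      zero_pow, zero_mul, sub_zero] at hftc
    rw [factorial_succ, pow_succ]
    field_simp
    push_cast
    linear_combination hftc
end

lemma inv_neg_pow_succ_eq_of_pow_eq_neg_one {w : ℂ} {n p : ℕ} (hroot : w ^ n = -1) (hp : p < n) :
    ((-w) ^ (p + 1))⁻¹ = (-1) ^ p * w ^ (n - 1 - p) := by
  refine (eq_inv_of_mul_eq_one_left ?_).symm
  have hsplit : w ^ (n - 1 - p) * w ^ (p + 1) = -1 := by rw [← pow_add, ← hroot]; congr 1; omega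
  have hsign : ((-1 : ℂ) ^ p) ^ 2 = 1 := by rw [← pow_mul, pow_mul', neg_one_sq, one_pow]
  rw [neg_pow]
  linear_combination (-((-1 : ℂ) ^ p) ^ 2) * hsplit + hsign

noncomputable def reExpSum {ι : Type*} (s : Finset ι) (a w : ι → ℂ) (t : ℝ) : ℝ :=
  (∑ k ∈ s, a k * cexp (w k * t)).re

namespace reExpSum
variable {ι : Type*} (s : Finset ι) (a w : ι → ℂ)

lemma hasDerivAt (t : ℝ) :
    HasDerivAt (reExpSum s a w) (reExpSum s (fun k => a k * w k) w t) t := by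
  have h : HasDerivAt (fun t : ℝ => ∑ k ∈ s, a k * cexp (w k * t))
      (∑ k ∈ s, a k * w k * cexp (w k * t)) t :=
    HasDerivAt.fun_sum fun k _ => by
      simpa only [mul_assoc] using (hasDerivAt_cexp_mul_ofReal (w k) t).const_mul (a k)
  exact reCLM.hasFDerivAt.comp_hasDerivAt t h

lemma iteratedDeriv_eq (j : ℕ) :
    iteratedDeriv j (reExpSum s a w) = reExpSum s (fun k => a k * w k ^ j) w := by
  induction j with
  | zero => simp
  | succ j ih =>
    ext t
    rw [iteratedDeriv_succ, ih, (hasDerivAt _ _ _ t).deriv]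
    simp only [pow_succ, mul_assoc]

lemma iteratedDeriv_zero_eq (j : ℕ) :
    iteratedDeriv j (reExpSum s a w) 0 = (∑ k ∈ s, a k * w k ^ j).re := by
  simp [iteratedDeriv_eq, reExpSum]

lemma integral_Ioi_pow_mul (hw : ∀ k ∈ s, (w k).re < 0) (p : ℕ) :
    ∫ t in Ioi (0 : ℝ), t ^ p * reExpSum s a w t
      = (∑ k ∈ s, a k * (p ! / (-w k) ^ (p + 1))).re := by
  have hint : ∀ k ∈ s, IntegrableOn (fun t : ℝ => a k * ((t : ℂ) ^ p * cexp (w k * t))) (Ioi 0) :=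
    fun k hk => (integrableOn_pow_mul_cexp (hw k hk) p).const_mul (a k)
  calc ∫ t in Ioi (0 : ℝ), t ^ p * reExpSum s a w t
      = ∫ t in Ioi (0 : ℝ), (∑ k ∈ s, a k * ((t : ℂ) ^ p * cexp (w k * t))).re := by
        refine integral_congr_ae (ae_of_all _ fun t => ?_)
        simp only [reExpSum, ← re_ofReal_mul, mul_sum]
        congr 1
        refine sum_congr rfl fun k _ => ?_
        push_cast
        ring
    _ = (∑ k ∈ s, ∫ t in Ioi (0 : ℝ), a k * ((t : ℂ) ^ p * cexp (w k * t))).re := by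
        rw [← integral_finsetSum _ hint]
        exact integral_re (integrable_finsetSum _ hint)
    _ = (∑ k ∈ s, a k * (p ! / (-w k) ^ (p + 1))).re := by
        congr 1
        refine sum_congr rfl fun k hk => ?_
        rw [integral_const_mul, integral_Ioi_pow_mul_cexp (hw k hk)]

lemma integral_Ioi_pow_mul_eq_iteratedDeriv {n p : ℕ} (hw : ∀ k ∈ s, (w k).re < 0)
    (hroot : ∀ k ∈ s, w k ^ n = -1) (hp : p < n) :
    ∫ t in Ioi (0 : ℝ), t ^ p * reExpSum s a w t
      = (-1) ^ p * p ! * iteratedDeriv (n - 1 - p) (reExpSum s a w) 0 := by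
  rw [integral_Ioi_pow_mul s a w hw, iteratedDeriv_zero_eq]
  have hterm : ∀ k ∈ s, a k * (p ! / (-w k) ^ (p + 1))
      = ((-1) ^ p * p ! : ℝ) * (a k * w k ^ (n - 1 - p)) := fun k hk => by
    rw [div_eq_mul_inv, inv_neg_pow_succ_eq_of_pow_eq_neg_one (hroot k hk) hp]
    push_cast
    ring
  rw [sum_congr rfl hterm, ← mul_sum, re_ofReal_mul]

end reExpSum

lemma integral_eq_zero_of_odd {f : ℝ → ℝ} (hf : ∀ x, f (-x) = -f x) : ∫ x, f x = 0 := by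
  have h := integral_neg_eq_self f volume
  simp only [hf, integral_neg] at h
  linarith

lemma integral_pow_mul_comp_abs_of_odd (g : ℝ → ℝ) {k : ℕ} (hk : Odd k) :
    ∫ τ, τ ^ k * g |τ| = 0 :=
  integral_eq_zero_of_odd fun τ => by rw [abs_neg, hk.neg_pow, neg_mul]

lemma integral_pow_mul_comp_abs_of_even (g : ℝ → ℝ) {k : ℕ} (hk : Even k) :
    ∫ τ, τ ^ k * g |τ| = 2 * ∫ t in Ioi (0 : ℝ), t ^ k * g t := by
  rw [← integral_comp_abs (f := fun t => t ^ k * g t)]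
  simp only [hk.pow_abs]

lemma re_sub_mul_I_mul_cexp (c d μ ω t : ℝ) :
    (((c : ℂ) - d * I) * cexp ((-(μ : ℂ) + ω * I) * t)).re
      = Real.exp (-μ * t) * (c * Real.cos (ω * t) + d * Real.sin (ω * t)) := by
  rw [show (-(μ : ℂ) + ω * I) * t = ↑(-μ * t) + ↑(ω * t) * I by push_cast; ring, exp_add,
    ← ofReal_exp, exp_mul_I, ← ofReal_cos, ← ofReal_sin]
  simp only [mul_re, mul_im, sub_re, sub_im, add_re, add_im, ofReal_re, ofReal_im, I_re, I_im]
  ring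

lemma cos_odd_mul_pi_div_pos {m k : ℕ} (hk : 2 * k + 1 < m) :
    0 < Real.cos ((1 + 2 * (k : ℝ)) * Real.pi / (2 * m)) := by
  have hk' : (1 + 2 * (k : ℝ)) < m := by exact_mod_cast (by omega : 1 + 2 * k < m)
  apply Real.cos_pos_of_mem_Ioo
  constructor
  · have : 0 ≤ (1 + 2 * (k : ℝ)) * Real.pi / (2 * m) := by positivity
    linarith [Real.pi_pos]
  · rw [div_lt_iff₀ (by exact_mod_cast (by omega : 0 < 2 * m))]
    nlinarith [Real.pi_pos]

lemma neg_cos_add_sin_mul_I_pow {m : ℕ} (hm : m ≠ 0) (k : ℕ) :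
    (-(Real.cos ((1 + 2 * (k : ℝ)) * Real.pi / (2 * m)) : ℂ)
      + Real.sin ((1 + 2 * (k : ℝ)) * Real.pi / (2 * m)) * I) ^ (2 * m) = -1 := by
  set θ := (1 + 2 * (k : ℝ)) * Real.pi / (2 * m)
  have hexp : -(Real.cos θ : ℂ) + Real.sin θ * I = cexp (↑(Real.pi - θ) * I) := by
    rw [exp_mul_I, ← ofReal_cos, ← ofReal_sin, Real.cos_pi_sub, Real.sin_pi_sub, ofReal_neg]
  -- `2m(π - θ) = (2(m - k) - 1)π` is an odd multiple of `π`
  have hangle : ((2 * m : ℕ) : ℂ) * (↑(Real.pi - θ) * I)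
      = ((m - k - 1 : ℤ) : ℂ) * (2 * Real.pi * I) + Real.pi * I := by
    simp only [θ]
    push_cast
    field_simp
    ring
  rw [hexp, ← exp_nat_mul, hangle, exp_add, exp_int_mul_two_pi_mul_I, exp_pi_mul_I, one_mul]

theorem stmt_4_general (m : ℕ) (hm0 : 0 < m)
    (c d : ℕ → ℝ) (L : ℝ → ℝ)
    (hL : ∀ t : ℝ, L t = ∑ k ∈ Finset.range (m / 2),
      Real.exp (-(Real.cos ((1 + 2 * (k : ℝ)) * Real.pi / (2 * m))) * t) *
        (c k * Real.cos (Real.sin ((1 + 2 * (k : ℝ)) * Real.pi / (2 * m)) * t) +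
         d k * Real.sin (Real.sin ((1 + 2 * (k : ℝ)) * Real.pi / (2 * m)) * t)))
    (hodd : ∀ j : ℕ, Odd j → 1 ≤ j → j ≤ 2 * m - 3 → iteratedDeriv j L 0 = 0)
    (htop : iteratedDeriv (2 * m - 1) L 0 = 1 / 2) :
    (∫ τ : ℝ, L |τ|) = 1 ∧
      ∀ k : ℕ, 1 ≤ k → k ≤ 2 * m - 1 → (∫ τ : ℝ, τ ^ k * L |τ|) = 0 := by
  set θ : ℕ → ℝ := fun k => (1 + 2 * (k : ℝ)) * Real.pi / (2 * m)
  set w : ℕ → ℂ := fun k => -(Real.cos (θ k) : ℂ) + Real.sin (θ k) * I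
  have hLw : L = reExpSum (range (m / 2)) (fun k => c k - d k * I) w := funext fun t => by
    rw [hL, reExpSum, re_sum]
    exact sum_congr rfl fun k _ => (re_sub_mul_I_mul_cexp _ _ _ _ _).symm
  have hw : ∀ k ∈ range (m / 2), (w k).re < 0 := fun k hk => by
    have hcos := cos_odd_mul_pi_div_pos (m := m) (k := k) (by rw [Finset.mem_range] at hk; omega)
    simp only [w, add_re, neg_re, ofReal_re, mul_re, ofReal_im, I_re, I_im]
    linarith
  have hmoment : ∀ p < 2 * m,
      ∫ t in Ioi (0 : ℝ), t ^ p * L t = (-1) ^ p * p ! * iteratedDeriv (2 * m - 1 - p) L 0 := by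
    rw [hLw]
    exact fun p hp => reExpSum.integral_Ioi_pow_mul_eq_iteratedDeriv _ _ _ hw
      (fun k _ => neg_cos_add_sin_mul_I_pow hm0.ne' k) hp
  refine ⟨?_, fun k hk1 hk2 => ?_⟩
  · have h0 := hmoment 0 (by omega)
    simp only [pow_zero, one_mul, factorial_zero, cast_one, Nat.sub_zero] at h0
    rw [integral_comp_abs, h0, htop]
    norm_num
  rcases k.even_or_odd with hk | hk
  · obtain ⟨b, rfl⟩ := hk
    rw [integral_pow_mul_comp_abs_of_even L ⟨b, rfl⟩, hmoment _ (by omega),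
      hodd _ ⟨m - b - 1, by omega⟩ (by omega) (by omega), mul_zero, mul_zero]
  · exact integral_pow_mul_comp_abs_of_odd L hk

/-- Even-`m` case of the Proposition in Section 3.3 (β = 1): if
`L(t) = Σ_{k<m/2} e^{−μ_k t}[c_k cos(ω_k t) + d_k sin(ω_k t)]` with
`μ_k = cos((1+2k)π/(2m))`, `ω_k = sin((1+2k)π/(2m))`, and the derivatives at `0` satisfy
`L^{(j)}(0) = 0` for odd `1 ≤ j ≤ 2m−3` and `L^{(2m−1)}(0) = 1/2`, then `t ↦ L(|t|)` is a
kernel of order `2m`. -/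
theorem stmt_4 (m : ℕ) (hm : Even m) (hm0 : 0 < m)
    (c d : ℕ → ℝ) (L : ℝ → ℝ)
    (hL : ∀ t : ℝ, L t = ∑ k ∈ Finset.range (m / 2),
      Real.exp (-(Real.cos ((1 + 2 * (k : ℝ)) * Real.pi / (2 * m))) * t) *
        (c k * Real.cos (Real.sin ((1 + 2 * (k : ℝ)) * Real.pi / (2 * m)) * t) +
         d k * Real.sin (Real.sin ((1 + 2 * (k : ℝ)) * Real.pi / (2 * m)) * t)))
    (hodd : ∀ j : ℕ, Odd j → 1 ≤ j → j ≤ 2 * m - 3 → iteratedDeriv j L 0 = 0)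
    (htop : iteratedDeriv (2 * m - 1) L 0 = 1 / 2) :
    (∫ τ : ℝ, L |τ|) = 1 ∧
      ∀ k : ℕ, 1 ≤ k → k ≤ 2 * m - 1 → (∫ τ : ℝ, τ ^ k * L |τ|) = 0 :=
  stmt_4_general m hm0 c d L hL hodd htop
end

section
/- Let m be an odd positive integer, β > 0, and for k = 1, …, (m−1)/2 set μ_k = cos(kπ/m) > 0 and ω_k = sin(kπ/m) > 0. Let c_0, c_k, d_k be real numbers and define P(t) = c_0 β e^{−βt} + Σ_{k=1}^{(m−1)/2} β e^{−βμ_k t} [c_k cos(ω_k β t) + d_k sin(ω_k β t)] for t ≥ 0. Assume the (one-sided) derivatives at 0 satisfy P^{(j)}(0) = 0 for every odd j with 1 ≤ j ≤ 2m−3 and P^{(2m−1)}(0) = −β^{2m}/2. Then for every continuous function G : [0,1] → ℝ, the function F_0(t) = ∫_0^1 P(|t−s|) G(s) ds is 2m times continuously differentiable on [0,1] and satisfies β^{−2m} F_0^{(2m)}(t) − F_0(t) = −G(t) for all t ∈ [0,1]; equivalently, (−1)^m β^{−2m} F_0^{(2m)}(t) + F_0(t) = G(t). -/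
/-!
Each exponential `e^{z t}` in `P` has `z^{2m} = β^{2m}`, because `z = -β e^{-ikπ/m}`; hence
`P^{(2m)} = β^{2m} P`. Split `F₀(t)` at `s = t` into `∫_0^t P(t-s) G(s) ds + ∫_t^1 P(s-t) G(s) ds`
and differentiate with the Leibniz rule: the `j`-th derivative has the same shape with `P^{(j)}` in
place of `P` and the sign `(-1)^j` in front of the second integral, and each differentiation
creates the boundary term `(1 - (-1)^j) P^{(j)}(0) G(t)`. By the conditions on the odd
derivatives of `P` at `0` these all vanish except the last one, `-β^{2m} G(t)`, so
`F₀^{(2m)} = β^{2m} (F₀ - G)`.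
-/

open MeasureTheory Set Filter Function Complex
open scoped Real ContDiff

theorem iteratedDeriv_eq_of_hasDerivAt_succ {F : Type*} [NormedAddCommGroup F] [NormedSpace ℝ F]
    {h : ℕ → ℝ → F} {n : ℕ} (hd : ∀ j < n, ∀ x, HasDerivAt (h j) (h (j + 1) x) x) :
    ∀ j ≤ n, iteratedDeriv j (h 0) = h j := by
  intro j hj
  induction j with
  | zero => exact iteratedDeriv_zero
  | succ j ih =>
    rw [iteratedDeriv_succ, ih (by omega)]
    exact funext fun x => (hd j (by omega) x).deriv

section Leibniz

variable {E : Type*} [NormedAddCommGroup E] [NormedSpace ℝ E]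

theorem hasDerivAt_intervalIntegral_diag [CompleteSpace E] {φ : ℝ → ℝ → E}
    (hφ : Continuous (uncurry φ)) (t₀ : ℝ) :
    HasDerivAt (fun t => ∫ s in t₀..t, φ t s) (φ t₀ t₀) t₀ := by
  rw [hasDerivAt_iff_isLittleO, Asymptotics.isLittleO_iff]
  intro ε hε
  obtain ⟨δ, hδ, hclose⟩ := Metric.continuousAt_iff.1 (hφ.continuousAt (x := (t₀, t₀))) ε hε
  filter_upwards [Metric.ball_mem_nhds t₀ hδ] with t ht
  have hnear : ∀ s ∈ uIoc t₀ t, ‖φ t s - φ t₀ t₀‖ ≤ ε := by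
    intro s hs
    have hs' : dist s t₀ < δ :=
      (abs_sub_left_of_mem_uIcc (uIoc_subset_uIcc hs)).trans_lt ht
    rw [← dist_eq_norm]
    exact (hclose (x := (t, s)) (by rw [Prod.dist_eq]; exact max_lt ht hs')).le
  calc ‖(∫ s in t₀..t, φ t s) - (∫ s in t₀..t₀, φ t₀ s) - (t - t₀) • φ t₀ t₀‖
      = ‖∫ s in t₀..t, (φ t s - φ t₀ t₀)‖ := by
        rw [intervalIntegral.integral_same, sub_zero, intervalIntegral.integral_sub
          ((hφ.uncurry_left t).intervalIntegrable _ _) intervalIntegrable_const,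
          intervalIntegral.integral_const]
    _ ≤ ε * |t - t₀| := intervalIntegral.norm_integral_le_of_norm_le_const hnear
    _ = ε * ‖t - t₀‖ := by rw [Real.norm_eq_abs]

theorem hasDerivAt_intervalIntegral_of_continuous_deriv {φ φ' : ℝ → ℝ → E}
    (hφ : Continuous (uncurry φ)) (hφ' : Continuous (uncurry φ'))
    (hderiv : ∀ t s, HasDerivAt (φ · s) (φ' t s) t) (a b t₀ : ℝ) :
    HasDerivAt (fun t => ∫ s in a..b, φ t s) (∫ s in a..b, φ' t₀ s) t₀ := by
  obtain ⟨C, hC⟩ := ((isCompact_closedBall t₀ 1).prod (isCompact_uIcc (a := a) (b := b)))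
    |>.exists_bound_of_continuousOn hφ'.continuousOn
  refine (intervalIntegral.hasDerivAt_integral_of_dominated_loc_of_deriv_le (bound := fun _ => C)
    (Metric.closedBall_mem_nhds t₀ one_pos)
    (Eventually.of_forall fun t => (hφ.uncurry_left t).aestronglyMeasurable)
    ((hφ.uncurry_left t₀).intervalIntegrable _ _) (hφ'.uncurry_left t₀).aestronglyMeasurable
    (Eventually.of_forall fun s hs t ht => hC (t, s) ⟨ht, uIoc_subset_uIcc hs⟩)
    intervalIntegrable_const (Eventually.of_forall fun s _ t _ => hderiv t s)).2

theorem hasDerivAt_intervalIntegral_leibniz [CompleteSpace E] {φ φ' : ℝ → ℝ → E}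
    (hφ : Continuous (uncurry φ)) (hφ' : Continuous (uncurry φ'))
    (hderiv : ∀ t s, HasDerivAt (φ · s) (φ' t s) t) (a t₀ : ℝ) :
    HasDerivAt (fun t => ∫ s in a..t, φ t s) (φ t₀ t₀ + ∫ s in a..t₀, φ' t₀ s) t₀ := by
  have hsplit : (fun t => ∫ s in a..t, φ t s) =
      fun t => (∫ s in a..t₀, φ t s) + ∫ s in t₀..t, φ t s := by
    funext t
    exact (intervalIntegral.integral_add_adjacent_intervals
      ((hφ.uncurry_left t).intervalIntegrable _ _)
      ((hφ.uncurry_left t).intervalIntegrable _ _)).symm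
  rw [hsplit, add_comm (φ t₀ t₀)]
  exact (hasDerivAt_intervalIntegral_of_continuous_deriv hφ hφ' hderiv a t₀ t₀).add
    (hasDerivAt_intervalIntegral_diag hφ t₀)

end Leibniz

theorem hasDerivAt_re_sum_cexp {ι : Type*} (s : Finset ι) (a z : ι → ℂ) (x : ℝ) :
    HasDerivAt (fun t : ℝ => (∑ k ∈ s, a k * cexp (z k * t)).re)
      (∑ k ∈ s, a k * z k * cexp (z k * x)).re x := by
  have hterm : ∀ k ∈ s, HasDerivAt (fun t : ℝ => a k * cexp (z k * t))
      (a k * z k * cexp (z k * x)) x := fun k _ => by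
    have := (((hasDerivAt_id (x : ℂ)).const_mul (z k)).cexp.const_mul (a k)).comp_ofReal
    simpa [mul_comm, mul_left_comm, mul_assoc] using this
  exact reCLM.hasFDerivAt.comp_hasDerivAt x (HasDerivAt.fun_sum hterm)

theorem iteratedDeriv_re_sum_cexp {ι : Type*} (s : Finset ι) (a z : ι → ℂ) (n : ℕ) :
    iteratedDeriv n (fun t : ℝ => (∑ k ∈ s, a k * cexp (z k * t)).re) =
      fun t : ℝ => (∑ k ∈ s, a k * z k ^ n * cexp (z k * t)).re := by
  have hd : ∀ j < n + 1, ∀ x : ℝ,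
      HasDerivAt (fun t : ℝ => (∑ k ∈ s, a k * z k ^ j * cexp (z k * t)).re)
        (∑ k ∈ s, a k * z k ^ (j + 1) * cexp (z k * x)).re x := fun j _ x => by
    simpa only [pow_succ, mul_assoc] using hasDerivAt_re_sum_cexp s (fun k => a k * z k ^ j) z x
  simpa using iteratedDeriv_eq_of_hasDerivAt_succ hd n n.le_succ

theorem re_mul_cexp (c d a b t : ℝ) :
    (((c : ℂ) - d * I) * cexp ((a + b * I) * t)).re =
      Real.exp (a * t) * (c * Real.cos (b * t) + d * Real.sin (b * t)) := by
  have h : ((a : ℂ) + b * I) * t = ((a * t : ℝ) : ℂ) + ((b * t : ℝ) : ℂ) * I := by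
    push_cast
    ring
  rw [h]
  simp only [ofReal_mul, mul_re, sub_re, ofReal_re, I_re, mul_zero, ofReal_im, I_im, mul_one,
    sub_self, sub_zero, exp_re, add_re, mul_im, zero_mul, add_zero, add_im, zero_add, sub_im,
    zero_sub, exp_im, neg_mul, sub_neg_eq_add]
  ring

/-- `-β e^{-ikπ/m}`, written in the coordinates in which it appears in the kernel. -/
noncomputable def kernelRoot (β : ℝ) (m k : ℕ) : ℂ :=
  ((-(β * Real.cos (k * π / m)) : ℝ) : ℂ) + ((Real.sin (k * π / m) * β : ℝ) : ℂ) * I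

theorem kernelRoot_pow_two_mul (β : ℝ) {m : ℕ} (hm : m ≠ 0) (k : ℕ) :
    kernelRoot β m k ^ (2 * m) = β ^ (2 * m) := by
  have hpolar : kernelRoot β m k = -β * cexp (-(k * π / m : ℂ) * I) := by
    rw [kernelRoot, exp_mul_I, cos_neg, sin_neg]
    push_cast
    ring
  have hroot : cexp (-(k * π / m : ℂ) * I) ^ (2 * m) = 1 := by
    rw [← exp_nat_mul, show ((2 * m : ℕ) : ℂ) * (-(k * π / m : ℂ) * I) = (-k : ℤ) * (2 * π * I) by
      push_cast; field_simp]
    exact exp_int_mul_two_pi_mul_I _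
  rw [hpolar, mul_pow, hroot, mul_one, (even_two_mul m).neg_pow]

theorem iteratedDeriv_two_mul_kernel {m : ℕ} (hm : m ≠ 0) {β : ℝ} {c d : ℕ → ℝ} {P : ℝ → ℝ}
    (hP : ∀ t : ℝ, P t = c 0 * β * Real.exp (-(β * t)) +
      ∑ k ∈ Finset.Icc 1 ((m - 1) / 2),
      β * Real.exp (-(β * Real.cos ((k : ℝ) * Real.pi / (m : ℝ))) * t) *
        (c k * Real.cos (Real.sin ((k : ℝ) * Real.pi / (m : ℝ)) * β * t) +
         d k * Real.sin (Real.sin ((k : ℝ) * Real.pi / (m : ℝ)) * β * t))) :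
    iteratedDeriv (2 * m) P = fun t => β ^ (2 * m) * P t := by
  have hterm : ∀ (k : ℕ) (t : ℝ), (((β : ℂ) * (c k - d k * I)) * cexp (kernelRoot β m k * t)).re =
      β * Real.exp (-(β * Real.cos (k * π / m)) * t) *
        (c k * Real.cos (Real.sin (k * π / m) * β * t) +
          d k * Real.sin (Real.sin (k * π / m) * β * t)) := fun k t => by
    rw [mul_assoc, re_ofReal_mul, kernelRoot, re_mul_cexp]
    ring
  have hrep : P = fun t : ℝ => (∑ k ∈ insert 0 (Finset.Icc 1 ((m - 1) / 2)),
      ((β : ℂ) * (c k - d k * I)) * cexp (kernelRoot β m k * t)).re := by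
    funext t
    rw [hP, Finset.sum_insert (by simp), add_re, re_sum, hterm]
    congr 1
    · simp only [Nat.cast_zero, zero_mul, zero_div, Real.cos_zero, Real.sin_zero, mul_one, neg_mul,
        mul_zero, add_zero]
      ring
    · exact Finset.sum_congr rfl fun k _ => (hterm k t).symm
  rw [hrep, iteratedDeriv_re_sum_cexp]
  funext t
  simp only [kernelRoot_pow_two_mul β hm, re_sum]
  rw [Finset.mul_sum]
  refine Finset.sum_congr rfl fun k _ => ?_
  rw [mul_right_comm, ← ofReal_pow, mul_comm _ ((β ^ (2 * m) : ℝ) : ℂ), mul_assoc, re_ofReal_mul]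

/-- `∫_0^1 K(t - s) g(s) ds` for the kernel `K` equal to `f` on `[0, ∞)` and to `σ f(-·)` on
`(-∞, 0)`; `σ = 1` gives the kernel `f(|·|)`, and differentiating `K` flips `σ`. -/
noncomputable def twoSidedConv (f : ℝ → ℝ) (σ : ℝ) (g : ℝ → ℝ) (t : ℝ) : ℝ :=
  (∫ s in (0:ℝ)..t, f (t - s) * g s) + σ * ∫ s in t..1, f (s - t) * g s

theorem hasDerivAt_twoSidedConv {f g : ℝ → ℝ} (hf : ContDiff ℝ 1 f) (hg : Continuous g)
    (σ t : ℝ) :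
    HasDerivAt (twoSidedConv f σ g)
      (twoSidedConv (deriv f) (-σ) g t + (1 - σ) * f 0 * g t) t := by
  have hfd : ∀ x, HasDerivAt f (deriv f x) x := fun x =>
    (hf.differentiable one_ne_zero x).hasDerivAt
  have hf' := hf.continuous_deriv le_rfl
  have hleft := hasDerivAt_intervalIntegral_leibniz (φ := fun t s => f (t - s) * g s)
    (φ' := fun t s => deriv f (t - s) * g s) (by fun_prop) (by fun_prop)
    (fun t s => ((hfd _).comp_sub_const t s).mul_const (g s)) 0 t
  have hright := hasDerivAt_intervalIntegral_leibniz (φ := fun t s => f (s - t) * g s)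
    (φ' := fun t s => -deriv f (s - t) * g s) (by fun_prop) (by fun_prop)
    (fun t s => ((hfd _).comp_const_sub s t).mul_const (g s)) 1 t
  have hright' : HasDerivAt (fun t => ∫ s in t..1, f (s - t) * g s) _ t :=
    hright.neg.congr_of_eventuallyEq
      (Eventually.of_forall fun t => intervalIntegral.integral_symm _ _)
  unfold twoSidedConv
  refine (hleft.add (hright'.const_mul σ)).congr_deriv ?_
  simp only [sub_self, intervalIntegral.integral_neg, neg_mul, intervalIntegral.integral_symm t 1]
  ring

theorem twoSidedConv_const_mul (κ : ℝ) (f : ℝ → ℝ) (σ : ℝ) (g : ℝ → ℝ) (t : ℝ) :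
    twoSidedConv (fun u => κ * f u) σ g t = κ * twoSidedConv f σ g t := by
  simp only [twoSidedConv, mul_assoc, intervalIntegral.integral_const_mul]
  ring

theorem integral_abs_sub_mul_eq_twoSidedConv {f g : ℝ → ℝ} (hf : Continuous f)
    (hg : Continuous g) {t : ℝ} (ht : t ∈ Icc (0 : ℝ) 1) :
    ∫ s in (0 : ℝ)..1, f |t - s| * g s = twoSidedConv f 1 g t := by
  have hint : ∀ a b : ℝ, IntervalIntegrable (fun s => f |t - s| * g s) volume a b := fun a b =>
    (by fun_prop : Continuous fun s => f |t - s| * g s).intervalIntegrable a b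
  rw [twoSidedConv, one_mul,
    ← intervalIntegral.integral_add_adjacent_intervals (hint 0 t) (hint t 1)]
  congr 1
  · refine intervalIntegral.integral_congr fun s hs => ?_
    rw [uIcc_of_le ht.1] at hs
    simp only [abs_of_nonneg (sub_nonneg.2 hs.2)]
  · refine intervalIntegral.integral_congr fun s hs => ?_
    rw [uIcc_of_le ht.2] at hs
    simp only [abs_sub_comm t s, abs_of_nonneg (sub_nonneg.2 hs.1)]

section Green

variable {P g : ℝ → ℝ} {m : ℕ} {κ : ℝ}

theorem hasDerivAt_twoSidedConv_iteratedDeriv (hP : ContDiff ℝ ∞ P) (hg : Continuous g)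
    (j : ℕ) (t : ℝ) :
    HasDerivAt (twoSidedConv (iteratedDeriv j P) ((-1) ^ j) g)
      (twoSidedConv (iteratedDeriv (j + 1) P) ((-1) ^ (j + 1)) g t +
        (1 - (-1) ^ j) * iteratedDeriv j P 0 * g t) t := by
  have hC1 : ContDiff ℝ 1 (iteratedDeriv j P) :=
    (contDiff_nat_succ_iff_contDiff_one_iteratedDeriv.1 (contDiff_infty.1 hP (j + 1))).2
  simpa only [iteratedDeriv_succ, pow_succ, mul_neg_one] using
    hasDerivAt_twoSidedConv hC1 hg ((-1) ^ j) t

theorem iteratedDeriv_twoSidedConv_of_le (hP : ContDiff ℝ ∞ P) (hg : Continuous g)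
    (hodd : ∀ j : ℕ, Odd j → j ≤ 2 * m - 3 → iteratedDeriv j P 0 = 0) :
    ∀ j ≤ 2 * m - 1, iteratedDeriv j (twoSidedConv P 1 g) =
      twoSidedConv (iteratedDeriv j P) ((-1) ^ j) g := by
  refine iteratedDeriv_eq_of_hasDerivAt_succ
    (h := fun j => twoSidedConv (iteratedDeriv j P) ((-1) ^ j) g) fun j hj t => ?_
  have hjump : (1 - (-1) ^ j) * iteratedDeriv j P 0 = 0 := by
    rcases Nat.even_or_odd j with hj' | hj'
    · rw [hj'.neg_one_pow, sub_self, zero_mul]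
    · rw [hodd j hj' (by obtain ⟨r, rfl⟩ := hj'; omega), mul_zero]
  simpa only [hjump, zero_mul, add_zero] using hasDerivAt_twoSidedConv_iteratedDeriv hP hg j t

theorem iteratedDeriv_two_mul_twoSidedConv (hP : ContDiff ℝ ∞ P) (hg : Continuous g)
    (hodd : ∀ j : ℕ, Odd j → j ≤ 2 * m - 3 → iteratedDeriv j P 0 = 0) (hm : 0 < m)
    (htop : iteratedDeriv (2 * m - 1) P 0 = -(κ / 2))
    (hODE : iteratedDeriv (2 * m) P = fun t => κ * P t) :
    iteratedDeriv (2 * m) (twoSidedConv P 1 g) = fun t => κ * (twoSidedConv P 1 g t - g t) := by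
  have hsucc : 2 * m = 2 * m - 1 + 1 := by omega
  have hsign : (-1 : ℝ) ^ (2 * m - 1) = -1 :=
    (Nat.Even.sub_odd (by omega) (even_two_mul m) odd_one).neg_one_pow
  funext t
  rw [hsucc, iteratedDeriv_succ, iteratedDeriv_twoSidedConv_of_le hP hg hodd _ le_rfl,
    (hasDerivAt_twoSidedConv_iteratedDeriv hP hg _ t).deriv, ← hsucc, hODE,
    (even_two_mul m).neg_one_pow, twoSidedConv_const_mul, hsign, htop]
  ring

theorem contDiff_twoSidedConv (hP : ContDiff ℝ ∞ P) (hg : Continuous g)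
    (hodd : ∀ j : ℕ, Odd j → j ≤ 2 * m - 3 → iteratedDeriv j P 0 = 0) (hm : 0 < m)
    (htop : iteratedDeriv (2 * m - 1) P 0 = -(κ / 2))
    (hODE : iteratedDeriv (2 * m) P = fun t => κ * P t) :
    ContDiff ℝ (2 * m : ℕ) (twoSidedConv P 1 g) := by
  have hdiff : ∀ j < 2 * m, Differentiable ℝ (iteratedDeriv j (twoSidedConv P 1 g)) :=
    fun j hj t => by
      rw [iteratedDeriv_twoSidedConv_of_le hP hg hodd j (by omega)]
      exact (hasDerivAt_twoSidedConv_iteratedDeriv hP hg j t).differentiableAt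
  refine contDiff_nat_iff_iteratedDeriv.2 ⟨fun j hj => ?_, hdiff⟩
  rcases hj.lt_or_eq with hj | rfl
  · exact (hdiff j hj).continuous
  · rw [iteratedDeriv_two_mul_twoSidedConv hP hg hodd hm htop hODE]
    exact continuous_const.mul ((hdiff 0 (by omega)).continuous.sub hg)

end Green

theorem stmt_7_general (m : ℕ) (hm : Odd m) (β : ℝ) (hβ : 0 < β)
    (c d : ℕ → ℝ) (P : ℝ → ℝ)
    (hP : ∀ t : ℝ, P t = c 0 * β * Real.exp (-(β * t)) +
      ∑ k ∈ Finset.Icc 1 ((m - 1) / 2),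
      β * Real.exp (-(β * Real.cos ((k : ℝ) * Real.pi / (m : ℝ))) * t) *
        (c k * Real.cos (Real.sin ((k : ℝ) * Real.pi / (m : ℝ)) * β * t) +
         d k * Real.sin (Real.sin ((k : ℝ) * Real.pi / (m : ℝ)) * β * t)))
    (hodd : ∀ j : ℕ, Odd j → 1 ≤ j → j ≤ 2 * m - 3 → iteratedDeriv j P 0 = 0)
    (htop : iteratedDeriv (2 * m - 1) P 0 = -(β ^ (2 * m) / 2))
    (G : ℝ → ℝ) (hG : ContinuousOn G (Set.Icc 0 1))
    (F₀ : ℝ → ℝ) (hF₀ : ∀ t : ℝ, F₀ t = ∫ s in (0:ℝ)..1, P |t - s| * G s) :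
    ContDiffOn ℝ (2 * m : ℕ) F₀ (Set.Icc 0 1) ∧
      (∀ t ∈ Set.Icc (0:ℝ) 1,
        (β ^ (2 * m))⁻¹ * iteratedDerivWithin (2 * m) F₀ (Set.Icc 0 1) t - F₀ t = -G t) ∧
      (∀ t ∈ Set.Icc (0:ℝ) 1,
        (-1 : ℝ) ^ m * (β ^ (2 * m))⁻¹ * iteratedDerivWithin (2 * m) F₀ (Set.Icc 0 1) t
          + F₀ t = G t) := by
  -- extend `G` continuously to `ℝ`, so that the calculus can be done on `ℝ` rather than `[0, 1]`
  obtain ⟨g, hg, hgG⟩ : ∃ g : ℝ → ℝ, Continuous g ∧ EqOn g G (Icc 0 1) :=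
    ⟨IccExtend zero_le_one ((Icc 0 1).domRestrict G), hG.domRestrict.Icc_extend',
      fun t ht => IccExtend_of_mem _ _ ht⟩
  have hPs : ContDiff ℝ ∞ P := funext hP ▸ by fun_prop
  have hodd' : ∀ j : ℕ, Odd j → j ≤ 2 * m - 3 → iteratedDeriv j P 0 = 0 :=
    fun j hj => hodd j hj hj.pos
  have hODE := iteratedDeriv_two_mul_kernel hm.pos.ne' hP
  have hH := contDiff_twoSidedConv hPs hg hodd' hm.pos htop hODE
  have hF : EqOn F₀ (twoSidedConv P 1 g) (Icc 0 1) := fun t ht => by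
    rw [hF₀, ← integral_abs_sub_mul_eq_twoSidedConv hPs.continuous hg ht]
    refine intervalIntegral.integral_congr fun s hs => ?_
    rw [uIcc_of_le zero_le_one] at hs
    simp only [hgG hs]
  have hD : ∀ t ∈ Icc (0 : ℝ) 1,
      iteratedDerivWithin (2 * m) F₀ (Icc 0 1) t = β ^ (2 * m) * (F₀ t - G t) := fun t ht => by
    rw [iteratedDerivWithin_congr hF ht, iteratedDerivWithin_eq_iteratedDeriv
      uniqueDiffOn_Icc_zero_one hH.contDiffAt ht, iteratedDeriv_two_mul_twoSidedConv hPs hg hodd'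
      hm.pos htop hODE]
    beta_reduce
    rw [← hF ht, hgG ht]
  have hβm : β ^ (2 * m) ≠ 0 := by positivity
  refine ⟨hH.contDiffOn.congr hF, fun t ht => ?_, fun t ht => ?_⟩
  · rw [hD t ht, inv_mul_cancel_left₀ hβm]
    ring
  · rw [hD t ht, hm.neg_one_pow, mul_assoc, inv_mul_cancel_left₀ hβm]
    ring

/-- Green's-function property of Section 3.2 (odd `m`): with
`P(t) = c_0 β e^{−βt} + Σ_{k=1}^{(m−1)/2} β e^{−βμ_k t}[c_k cos(ω_k β t) + d_k sin(ω_k β t)]`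
satisfying `P^{(j)}(0) = 0` for odd `1 ≤ j ≤ 2m−3` and `P^{(2m−1)}(0) = −β^{2m}/2`, the
function `F₀(t) = ∫_0^1 P(|t−s|) G(s) ds` is `2m` times continuously differentiable on
`[0,1]` and solves `β^{−2m} F₀^{(2m)} − F₀ = −G` there, equivalently
`(−1)^m β^{−2m} F₀^{(2m)} + F₀ = G`. -/
theorem stmt_7 (m : ℕ) (hm : Odd m) (hm0 : 0 < m) (β : ℝ) (hβ : 0 < β)
    (c d : ℕ → ℝ) (P : ℝ → ℝ)
    (hP : ∀ t : ℝ, P t = c 0 * β * Real.exp (-(β * t)) +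
      ∑ k ∈ Finset.Icc 1 ((m - 1) / 2),
      β * Real.exp (-(β * Real.cos ((k : ℝ) * Real.pi / (m : ℝ))) * t) *
        (c k * Real.cos (Real.sin ((k : ℝ) * Real.pi / (m : ℝ)) * β * t) +
         d k * Real.sin (Real.sin ((k : ℝ) * Real.pi / (m : ℝ)) * β * t)))
    (hodd : ∀ j : ℕ, Odd j → 1 ≤ j → j ≤ 2 * m - 3 → iteratedDeriv j P 0 = 0)
    (htop : iteratedDeriv (2 * m - 1) P 0 = -(β ^ (2 * m) / 2))
    (G : ℝ → ℝ) (hG : ContinuousOn G (Set.Icc 0 1))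
    (F₀ : ℝ → ℝ) (hF₀ : ∀ t : ℝ, F₀ t = ∫ s in (0:ℝ)..1, P |t - s| * G s) :
    ContDiffOn ℝ (2 * m : ℕ) F₀ (Set.Icc 0 1) ∧
      (∀ t ∈ Set.Icc (0:ℝ) 1,
        (β ^ (2 * m))⁻¹ * iteratedDerivWithin (2 * m) F₀ (Set.Icc 0 1) t - F₀ t = -G t) ∧
      (∀ t ∈ Set.Icc (0:ℝ) 1,
        (-1 : ℝ) ^ m * (β ^ (2 * m))⁻¹ * iteratedDerivWithin (2 * m) F₀ (Set.Icc 0 1) t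
          + F₀ t = G t) :=
  stmt_7_general m hm β hβ c d P hP hodd htop G hG F₀ hF₀
end

section
/- Let m be an even positive integer and θ = π − π/(2m). Let B be the m×m real matrix with rows indexed by i = 0, …, m−1 whose entry in row i and column 2k+1 is cos((2k+1) i θ) and in row i and column 2k+2 is sin((2k+1) i θ), for k = 0, …, m/2 − 1 (so row 0 is (1, 0, 1, 0, …, 1, 0)). Then B is invertible. -/
/-!
Over `ℂ`, the column pair `(cos (k i θ), sin (k i θ))`, `k = 2p + 1`, of `B` combines as `c ± I s`
into the columns `(ω ^ (± k)) ^ i` of a transposed Vandermonde matrix, where `ω = exp (θ I)`.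
Since `θ = 2π (2m - 1) / (4m)` and `2m - 1` is prime to `4m`, `ω` is a primitive `4m`-th root of
unity, while the exponents `± k` are distinct integers in `[-m, m]`; so the nodes are distinct and
`B` times an explicit complex matrix is invertible.
-/

open Complex Matrix

theorem Matrix.isUnit_of_isUnit_map {n R S : Type*} [Fintype n] [DecidableEq n] [CommRing R]
    [CommRing S] (f : R →+* S) [IsLocalHom f] {A : Matrix n n R} (h : IsUnit (A.map f)) :
    IsUnit A := by
  rw [isUnit_iff_isUnit_det] at h ⊢
  rw [← RingHom.mapMatrix_apply, ← RingHom.map_det] at h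
  exact h.of_map

theorem Matrix.mul_of_ite_add_ite_apply {ι R : Type*} [Fintype ι] [DecidableEq ι]
    [CommSemiring R] (M : Matrix ι ι R) (f g : ι → ι) (c : ι → R) (i j : ι) :
    (M * Matrix.of fun k j => (if k = f j then 1 else 0) + if k = g j then c j else 0) i j =
      M i (f j) + M i (g j) * c j := by
  simp [Matrix.mul_apply, mul_add, Finset.sum_add_distrib]

theorem IsPrimitiveRoot.eq_of_zpow_eq_zpow {G₀ : Type*} [CommGroupWithZero G₀] {ζ : G₀} {k : ℕ}
    (h : IsPrimitiveRoot ζ k) {a b : ℤ} (hab : |a - b| < k) (he : ζ ^ a = ζ ^ b) : a = b := by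
  have hζ : ζ ≠ 0 := h.ne_zero (by rintro rfl; exact (abs_nonneg _).not_gt hab)
  have : ζ ^ (a - b) = 1 := by rw [zpow_sub₀ hζ, he, div_self (zpow_ne_zero _ hζ)]
  exact sub_eq_zero.mp (Int.eq_zero_of_abs_lt_dvd ((h.zpow_eq_one_iff_dvd _).mp this) hab)

theorem Complex.exp_ofReal_mul_I_zpow (θ : ℝ) (k : ℤ) :
    cexp (θ * I) ^ k = Real.cos (k * θ) + Real.sin (k * θ) * I := by
  rw [← exp_int_mul, ← mul_assoc, exp_mul_I]
  push_cast
  rfl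

theorem Complex.isPrimitiveRoot_exp_pi_sub_pi_div {m : ℕ} (hm : 0 < m) :
    IsPrimitiveRoot (cexp ((Real.pi - Real.pi / (2 * m) : ℝ) * I)) (4 * m) := by
  have hcop : IsCoprime (2 * (m : ℤ) - 1) ((4 * m : ℕ) : ℤ) :=
    ⟨-(2 * m + 1), m, by push_cast; ring⟩
  convert isPrimitiveRoot_exp_of_isCoprime _ _ (by positivity) hcop using 2
  have : (m : ℂ) ≠ 0 := by exact_mod_cast hm.ne'
  push_cast
  field_simp
  ring

def signedOdd (j : ℕ) : ℤ := if j % 2 = 0 then j + 1 else -j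

theorem signedOdd_injective : Function.Injective signedOdd := by
  intro j k h
  unfold signedOdd at h
  split_ifs at h <;> omega

theorem abs_signedOdd_le (j : ℕ) : |signedOdd j| ≤ j + 1 := by
  unfold signedOdd
  split_ifs <;> rw [abs_le] <;> constructor <;> omega

noncomputable def cosSinMatrix (m : ℕ) (θ : ℝ) : Matrix (Fin m) (Fin m) ℝ :=
  Matrix.of fun i j =>
    if j.val % 2 = 0 then Real.cos (((j.val : ℝ) + 1) * i.val * θ)
    else Real.sin (j.val * i.val * θ)

section Pairing

variable {m : ℕ} (hm : Even m)

def Fin.pairFst (j : Fin m) : Fin m :=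
  ⟨2 * (j / 2), by have := Nat.even_iff.mp hm; omega⟩

def Fin.pairSnd (j : Fin m) : Fin m :=
  ⟨2 * (j / 2) + 1, by have := Nat.even_iff.mp hm; omega⟩

noncomputable def pairingMatrix : Matrix (Fin m) (Fin m) ℂ :=
  Matrix.of fun k j =>
    (if k = Fin.pairFst hm j then 1 else 0) +
      if k = Fin.pairSnd hm j then (if j.val % 2 = 0 then I else -I) else 0

theorem cosSinMatrix_map_mul_pairingMatrix (θ : ℝ) :
    (cosSinMatrix m θ).map ofReal * pairingMatrix hm =
      (vandermonde fun j : Fin m => cexp (θ * I) ^ signedOdd j)ᵀ := by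
  ext i j
  rw [pairingMatrix, mul_of_ite_add_ite_apply, transpose_apply, vandermonde_apply,
    ← zpow_natCast, ← _root_.zpow_mul, exp_ofReal_mul_I_zpow]
  simp only [map_apply, cosSinMatrix, of_apply, Fin.pairFst, Fin.pairSnd, signedOdd]
  rw [if_pos (by omega), if_neg (by omega)]
  split_ifs with hj
  · rw [show 2 * (j.val / 2) = j.val by omega]
    push_cast
    ring_nf
  · rw [show 2 * (j.val / 2) + 1 = j.val by omega, show 2 * (j.val / 2) = j.val - 1 by omega,
      Nat.cast_sub (by omega)]
    push_cast
    simp only [sub_add_cancel, neg_mul, Complex.cos_neg, Complex.sin_neg]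
    ring

end Pairing

theorem injective_exp_zpow_signedOdd {m : ℕ} :
    Function.Injective fun j : Fin m =>
      cexp ((Real.pi - Real.pi / (2 * m) : ℝ) * I) ^ signedOdd j := by
  intro j k h
  have hj := abs_le.mp (abs_signedOdd_le j)
  have hk := abs_le.mp (abs_signedOdd_le k)
  have hjk : |signedOdd j - signedOdd k| < (4 * m : ℕ) := by
    push_cast
    exact abs_lt.mpr ⟨by omega, by omega⟩
  exact Fin.ext <| signedOdd_injective <|
    (isPrimitiveRoot_exp_pi_sub_pi_div j.pos).eq_of_zpow_eq_zpow hjk h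

theorem stmt_8_general (m : ℕ) (hm : Even m)
    (θ : ℝ) (hθ : θ = Real.pi - Real.pi / (2 * m))
    (B : Matrix (Fin m) (Fin m) ℝ)
    (hB : ∀ i j : Fin m, B i j =
      if j.val % 2 = 0
      then Real.cos (((j.val : ℝ) + 1) * (i.val : ℝ) * θ)
      else Real.sin ((j.val : ℝ) * (i.val : ℝ) * θ)) :
    IsUnit B := by
  obtain rfl : B = cosSinMatrix m θ := Matrix.ext hB
  subst hθ
  have hV := (Matrix.isUnit_iff_isUnit_det _).mpr
    (Matrix.det_vandermonde_ne_zero_iff.mpr (injective_exp_zpow_signedOdd (m := m))).isUnit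
  rw [← Matrix.isUnit_transpose, ← cosSinMatrix_map_mul_pairingMatrix hm] at hV
  exact Matrix.isUnit_of_isUnit_map ofRealHom (isUnit_of_mul_isUnit_left hV)

/-- Invertibility of the boundary-condition matrix `B^e_{11}` of Lemma 2 (even `m`):
the `m × m` matrix with row `i = 0, …, m−1` equal to
`(cos(iθ), sin(iθ), cos(3iθ), sin(3iθ), …, cos((m−1)iθ), sin((m−1)iθ))`,
`θ = π − π/(2m)`, is invertible. -/
theorem stmt_8 (m : ℕ) (hm : Even m) (hm0 : 0 < m)
    (θ : ℝ) (hθ : θ = Real.pi - Real.pi / (2 * m))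
    (B : Matrix (Fin m) (Fin m) ℝ)
    (hB : ∀ i j : Fin m, B i j =
      if j.val % 2 = 0
      then Real.cos (((j.val : ℝ) + 1) * (i.val : ℝ) * θ)
      else Real.sin ((j.val : ℝ) * (i.val : ℝ) * θ)) :
    IsUnit B :=
  stmt_8_general m hm θ hθ B hB
end

section
/- Let m ≥ 1 and N ≥ 2m+1 be integers, let D_m be the (N−m)×N real matrix with entries (D_m)_{j,ℓ} = (−1)^{m−(ℓ−j)} binom(m, ℓ−j) if 0 ≤ ℓ−j ≤ m and 0 otherwise, and let C be the N×N lower-triangular matrix with C_{ij} = 1 for j ≤ i and 0 otherwise. Fix k with 1 ≤ k ≤ m and set ω_j = (−1)^m (−1)^{2m−k−j} binom(2m−k, j) for j = 0, …, 2m−k. Then: (a) the last k rows of C^k D_m^T D_m are identically zero; and (b) for every row index i with m−k+1 ≤ i ≤ N−m, row i of C^k D_m^T D_m has the form (0, …, 0, ω_0, ω_1, …, ω_{2m−k}, 0, …, 0) with ω_0 in column i−m+k; i.e., (C^k D_m^T D_m)_{i, i−m+k+j} = ω_j for j = 0, …, 2m−k and all other entries of row i vanish. -/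
/-!
Let `d_μ` be the coefficients of `(X - 1)^μ`, so that `C` and `D_mᵀ` are the lower-triangular
Toeplitz matrices `T(1)` and `T(d_m)`. Multiplying such a matrix on the left by `C`
replaces its symbol by its partial sums, and the partial sums of `d_(μ+1)` are `-d_μ` because
`(X - 1)^(μ+1) = (X - 1)^μ (X - 1)` telescopes. Hence `C^k D_mᵀ = (-1)^k T(d_(m-k))`; as
`d_(m-k)` lives on `[0, m - k]`, its rows `i ≥ N - k` vanish. In a row `i ≥ m - k`, the
product with `D_m` is a correlation of `d_(m-k)` with `d_m`, which the reflection
`d_c (c - a) = (-1)^c d_c a` turns into the convolution `d_(m-k) * d_m = d_(2m-k)`.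
-/

open Finset Polynomial
open scoped Matrix

section DiffCoeff

variable (R : Type*) [Ring R]

/-- Row `j` of the difference matrix `D_μ` carries `diffCoeff R μ (l - j)` in column `l`. -/
noncomputable def diffCoeff (μ t : ℕ) : R := ((X - C 1 : R[X]) ^ μ).coeff t

variable {R}

theorem diffCoeff_eq (μ t : ℕ) : diffCoeff R μ t = (-1) ^ (μ - t) * (μ.choose t : R) := by
  rw [diffCoeff, sub_eq_add_neg, ← C_neg, coeff_X_add_C_pow]

theorem diffCoeff_eq_zero_of_lt {μ t : ℕ} (h : μ < t) : diffCoeff R μ t = 0 := by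
  rw [diffCoeff_eq, Nat.choose_eq_zero_of_lt h, Nat.cast_zero, mul_zero]

theorem diffCoeff_symm {μ a : ℕ} (h : a ≤ μ) :
    diffCoeff R μ (μ - a) = (-1) ^ μ * diffCoeff R μ a := by
  rw [diffCoeff_eq, diffCoeff_eq, Nat.choose_symm h, ← mul_assoc, ← pow_add,
    Nat.sub_sub_self h, (by omega : μ + (μ - a) = a + 2 * (μ - a)), pow_add, pow_mul]
  simp

theorem sum_range_coeff_mul_X_sub_C_one (p : R[X]) (s : ℕ) :
    ∑ t ∈ range (s + 1), (p * (X - C 1)).coeff t = -p.coeff s := by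
  induction s with
  | zero => simp [mul_sub]
  | succ s ih => rw [sum_range_succ, ih, coeff_mul_X_sub_C]; noncomm_ring

theorem sum_range_diffCoeff_succ (μ s : ℕ) :
    ∑ t ∈ range (s + 1), diffCoeff R (μ + 1) t = -diffCoeff R μ s := by
  simp only [diffCoeff, pow_succ, sum_range_coeff_mul_X_sub_C_one]

theorem sum_range_diffCoeff_mul (μ ν s : ℕ) :
    ∑ a ∈ range (s + 1), diffCoeff R μ a * diffCoeff R ν (s - a) = diffCoeff R (μ + ν) s := by
  rw [diffCoeff, pow_add, coeff_mul, Nat.sum_antidiagonal_eq_sum_range_succ_mk]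
  rfl

theorem sum_range_diffCoeff_mul_ite (μ ν s : ℕ) :
    ∑ a ∈ range (μ + 1), diffCoeff R μ a * (if a ≤ s then diffCoeff R ν (s - a) else 0) =
      diffCoeff R (μ + ν) s := by
  have hμ : range (μ + 1) ⊆ range (μ + s + 1) := range_subset_range.2 (by omega)
  have hs : range (s + 1) ⊆ range (μ + s + 1) := range_subset_range.2 (by omega)
  rw [← sum_range_diffCoeff_mul, sum_subset hμ fun a _ ha ↦ ?_, ← sum_subset hs fun a _ ha ↦ ?_]
  · refine sum_congr rfl fun a ha ↦ ?_
    rw [if_pos (by simp only [mem_range] at ha; omega)]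
  · rw [mem_range] at ha
    rw [if_neg (by omega), mul_zero]
  · rw [mem_range] at ha
    rw [diffCoeff_eq_zero_of_lt (by omega), zero_mul]

end DiffCoeff

section LowerToeplitz

variable {R : Type*} {n p q : ℕ}

def lowerToeplitz [Zero R] (f : ℕ → R) : Matrix (Fin n) (Fin p) R :=
  Matrix.of fun i j ↦ if j.val ≤ i.val then f (i - j) else 0

theorem lowerToeplitz_neg [NegZeroClass R] (f : ℕ → R) :
    (lowerToeplitz (fun s ↦ -f s) : Matrix (Fin n) (Fin p) R) = -lowerToeplitz f := by
  ext i j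
  simp only [lowerToeplitz, Matrix.of_apply, Matrix.neg_apply]
  split_ifs <;> simp

theorem lowerToeplitz_apply_eq_zero [Zero R] {f : ℕ → R} {c : ℕ} (hf : ∀ t, c < t → f t = 0)
    {i : Fin n} {j : Fin p} (h : c + j < i) : lowerToeplitz f i j = 0 := by
  simp only [lowerToeplitz, Matrix.of_apply]
  split_ifs
  · exact hf _ (by omega)
  · rfl

theorem lowerToeplitz_one_mul [Semiring R] (f : ℕ → R) :
    (lowerToeplitz (fun _ ↦ 1) : Matrix (Fin n) (Fin n) R) *
        (lowerToeplitz f : Matrix (Fin n) (Fin p) R) =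
      lowerToeplitz fun s ↦ ∑ t ∈ range (s + 1), f t := by
  ext i j
  simp only [Matrix.mul_apply, lowerToeplitz, Matrix.of_apply, ite_mul, one_mul, zero_mul]
  rw [Fin.sum_univ_eq_sum_range (fun r ↦ if r ≤ i then if j ≤ r then f (r - j) else 0 else 0)]
  split_ifs with hji
  · have hwindow : (range n).filter (fun r : ℕ ↦ r ≤ i ∧ j ≤ r) = Ico (j : ℕ) (i + 1) := by
      ext r; simp only [mem_filter, mem_range, mem_Ico]; omega
    simp only [← ite_and, ← sum_filter, hwindow, sum_Ico_eq_sum_range, Nat.add_sub_cancel_left,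
      Nat.sub_add_comm hji]
  · refine sum_eq_zero fun r _ ↦ ?_
    split_ifs <;> first | rfl | omega

theorem pow_mul_lowerToeplitz_diffCoeff [CommRing R] {μ r : ℕ} (h : r ≤ μ) :
    (lowerToeplitz (fun _ ↦ 1) : Matrix (Fin n) (Fin n) R) ^ r *
        (lowerToeplitz (diffCoeff R μ) : Matrix (Fin n) (Fin p) R) =
      (-1 : R) ^ r • lowerToeplitz (diffCoeff R (μ - r)) := by
  induction r with
  | zero => simp only [pow_zero, Matrix.one_mul, one_smul, Nat.sub_zero]
  | succ r ih =>
    obtain ⟨ν, hν⟩ : ∃ ν, μ - r = ν + 1 := ⟨μ - (r + 1), by omega⟩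
    rw [pow_succ', Matrix.mul_assoc, ih (by omega), Matrix.mul_smul, lowerToeplitz_one_mul, hν,
      (by omega : μ - (r + 1) = ν)]
    simp only [sum_range_diffCoeff_succ, lowerToeplitz_neg, smul_neg, pow_succ, mul_neg_one,
      neg_smul]

theorem sum_lowerToeplitz_mul [Semiring R] {f : ℕ → R} {c : ℕ} (hf : ∀ t, c < t → f t = 0)
    {i : Fin n} (hci : c ≤ i) (hip : (i : ℕ) < p) (g : ℕ → R) :
    ∑ j : Fin p, lowerToeplitz f i j * g j = ∑ a ∈ range (c + 1), f (c - a) * g (i - c + a) := by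
  simp only [lowerToeplitz, Matrix.of_apply, ite_mul, zero_mul]
  rw [Fin.sum_univ_eq_sum_range (fun j ↦ if j ≤ i then f (i - j) * g j else 0)]
  have hwindow : Ico (i - c : ℕ) (i + 1) ⊆ range p := fun j hj ↦ by
    simp only [mem_Ico, mem_range] at hj ⊢; omega
  rw [← sum_subset hwindow fun j _ hj ↦ ?_, sum_Ico_eq_sum_range,
    (by omega : (i : ℕ) + 1 - (i - c) = c + 1)]
  · refine sum_congr rfl fun a ha ↦ ?_
    rw [mem_range] at ha
    rw [if_pos (by omega), (by omega : (i : ℕ) - (i - c + a) = c - a)]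
  · rw [mem_Ico] at hj
    split_ifs
    · rw [hf _ (by omega), zero_mul]
    · rfl

theorem lowerToeplitz_mul_transpose_apply [Ring R] {c ν : ℕ} {i : Fin n} (l : Fin q)
    (hci : c ≤ i) (hip : (i : ℕ) < p) :
    ((lowerToeplitz (diffCoeff R c) : Matrix (Fin n) (Fin p) R) *
        (lowerToeplitz (diffCoeff R ν) : Matrix (Fin q) (Fin p) R)ᵀ) i l =
      (-1) ^ c * if (i : ℕ) ≤ l + c then diffCoeff R (c + ν) (l + c - i) else 0 := by
  rw [Matrix.mul_apply]
  refine (sum_lowerToeplitz_mul (fun _ ↦ diffCoeff_eq_zero_of_lt) hci hip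
    (fun j ↦ if j ≤ l then diffCoeff R ν (l - j) else 0)).trans ?_
  split_ifs with hil
  · rw [← sum_range_diffCoeff_mul_ite c ν (l + c - i), mul_sum]
    refine sum_congr rfl fun a ha ↦ ?_
    rw [mem_range] at ha
    rw [diffCoeff_symm (by omega), mul_assoc, (by omega : (l : ℕ) - (i - c + a) = l + c - i - a)]
    split_ifs <;> first | rfl | omega
  · rw [mul_zero]
    refine sum_eq_zero fun a ha ↦ ?_
    rw [mem_range] at ha
    rw [if_neg (by omega), mul_zero]

end LowerToeplitz

theorem stmt_13_general (m N k : ℕ) (hk2 : k ≤ m)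
    (D : Matrix (Fin (N - m)) (Fin N) ℝ)
    (hD : ∀ (j : Fin (N - m)) (l : Fin N), D j l =
      if j.val ≤ l.val ∧ l.val ≤ j.val + m
      then (-1 : ℝ) ^ (m - (l.val - j.val)) * (Nat.choose m (l.val - j.val) : ℝ)
      else 0)
    (C : Matrix (Fin N) (Fin N) ℝ)
    (hC : ∀ i j : Fin N, C i j = if j.val ≤ i.val then (1 : ℝ) else 0)
    (ω : ℕ → ℝ)
    (hω : ∀ j : ℕ, ω j =
      (-1 : ℝ) ^ m * (-1 : ℝ) ^ (2 * m - k - j) * (Nat.choose (2 * m - k) j : ℝ))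
    (M : Matrix (Fin N) (Fin N) ℝ) (hM : M = C ^ k * D.transpose * D) :
    (∀ i : Fin N, N - k ≤ i.val → ∀ l : Fin N, M i l = 0) ∧
    (∀ i : Fin N, m - k + 1 ≤ i.val + 1 → i.val + 1 ≤ N - m →
      (∀ j : ℕ, j ≤ 2 * m - k → ∀ hc : i.val + k + j - m < N,
          M i ⟨i.val + k + j - m, hc⟩ = ω j) ∧
      (∀ l : Fin N, (∀ j : ℕ, j ≤ 2 * m - k → l.val ≠ i.val + k + j - m) → M i l = 0)) := by
  have hC' : C = lowerToeplitz fun _ ↦ 1 := by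
    ext i j
    rw [hC]
    rfl
  have hD' : D = (lowerToeplitz (diffCoeff ℝ m))ᵀ := by
    ext j l
    rw [hD, Matrix.transpose_apply, lowerToeplitz, Matrix.of_apply, diffCoeff_eq]
    split_ifs with hband hle
    · rfl
    · exact absurd hband.1 hle
    · rw [Nat.choose_eq_zero_of_lt (by omega), Nat.cast_zero, mul_zero]
    · rfl
  have hM' : M = (-1 : ℝ) ^ k •
      ((lowerToeplitz (diffCoeff ℝ (m - k)) : Matrix (Fin N) (Fin (N - m)) ℝ) *
        (lowerToeplitz (diffCoeff ℝ m) : Matrix (Fin N) (Fin (N - m)) ℝ)ᵀ) := by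
    rw [hM, hC', hD', Matrix.transpose_transpose, pow_mul_lowerToeplitz_diffCoeff hk2,
      Matrix.smul_mul]
  refine ⟨fun i hi l ↦ ?_, fun i hi1 hi2 ↦ ?_⟩
  · rw [hM', Matrix.smul_apply, Matrix.mul_apply, sum_eq_zero fun j _ ↦ ?_, smul_zero]
    have hj := j.isLt
    rw [lowerToeplitz_apply_eq_zero (fun _ ↦ diffCoeff_eq_zero_of_lt) (by omega), zero_mul]
  have hrow : ∀ l : Fin N, M i l = (-1) ^ m *
      if (i : ℕ) ≤ l + (m - k) then diffCoeff ℝ (2 * m - k) (l + (m - k) - i) else 0 := by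
    intro l
    rw [hM', Matrix.smul_apply, lowerToeplitz_mul_transpose_apply l (by omega) (by omega),
      smul_eq_mul, ← mul_assoc, ← pow_add, Nat.add_sub_cancel' hk2,
      (by omega : m - k + m = 2 * m - k)]
  refine ⟨fun j hj hc ↦ ?_, fun l hl ↦ ?_⟩
  · rw [hrow]
    dsimp only
    rw [if_pos (by omega), hω, diffCoeff_eq, ← mul_assoc,
      (by omega : i + k + j - m + (m - k) - i = j)]
  · rw [hrow]
    split_ifs
    · rw [diffCoeff_eq_zero_of_lt (by by_contra! hle; exact hl _ hle (by omega)), mul_zero]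
    · rw [mul_zero]

/-- Structural claim of Section 2 on `C^k D_m^T D_m` for `1 ≤ k ≤ m`: (a) its last `k`
rows vanish; (b) each row `i` with `m−k+1 ≤ i ≤ N−m` (1-based) has the form
`(0, …, 0, ω_0, …, ω_{2m−k}, 0, …, 0)` with `ω_j = (−1)^m (−1)^{2m−k−j} C(2m−k, j)` and
`ω_0` in column `i − m + k`. -/
theorem stmt_13 (m N k : ℕ) (hm : 1 ≤ m) (hN : 2 * m + 1 ≤ N) (hk1 : 1 ≤ k) (hk2 : k ≤ m)
    (D : Matrix (Fin (N - m)) (Fin N) ℝ)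
    (hD : ∀ (j : Fin (N - m)) (l : Fin N), D j l =
      if j.val ≤ l.val ∧ l.val ≤ j.val + m
      then (-1 : ℝ) ^ (m - (l.val - j.val)) * (Nat.choose m (l.val - j.val) : ℝ)
      else 0)
    (C : Matrix (Fin N) (Fin N) ℝ)
    (hC : ∀ i j : Fin N, C i j = if j.val ≤ i.val then (1 : ℝ) else 0)
    (ω : ℕ → ℝ)
    (hω : ∀ j : ℕ, ω j =
      (-1 : ℝ) ^ m * (-1 : ℝ) ^ (2 * m - k - j) * (Nat.choose (2 * m - k) j : ℝ))
    (M : Matrix (Fin N) (Fin N) ℝ) (hM : M = C ^ k * D.transpose * D) :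
    (∀ i : Fin N, N - k ≤ i.val → ∀ l : Fin N, M i l = 0) ∧
    (∀ i : Fin N, m - k + 1 ≤ i.val + 1 → i.val + 1 ≤ N - m →
      (∀ j : ℕ, j ≤ 2 * m - k → ∀ hc : i.val + k + j - m < N,
          M i ⟨i.val + k + j - m, hc⟩ = ω j) ∧
      (∀ l : Fin N, (∀ j : ℕ, j ≤ 2 * m - k → l.val ≠ i.val + k + j - m) → M i l = 0)) :=
  stmt_13_general m N k hk2 D hD C hC ω hω M hM
end

section
/- Let m ≥ 1 and N ≥ 2m+1 be integers, let D_m be the (N−m)×N real matrix with entries (D_m)_{j,ℓ} = (−1)^{m−(ℓ−j)} binom(m, ℓ−j) if 0 ≤ ℓ−j ≤ m and 0 otherwise, and let C be the N×N lower-triangular matrix with C_{ij} = 1 for j ≤ i and 0 otherwise. Then for every b ∈ ℝ^N, C^m D_m^T D_m b = (−1)^m (Δ^m b_{m+1}, Δ^m b_{m+2}, …, Δ^m b_N, 0, …, 0)^T, where Δ^m b_k = Σ_{j=0}^m (−1)^{m−j} binom(m,j) b_{k−m+j}; that is, (C^m D_m^T D_m b)_i = (−1)^m Δ^m b_{m+i}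 for 1 ≤ i ≤ N−m and (C^m D_m^T D_m b)_i = 0 for N−m < i ≤ N. -/
/-!
`D b` is the vector of forward `m`-th differences of `b`, and `Dᵀ` convolves with the same
binomial kernel in the other direction: `Dᵀ u = (Δ_[-1])^[m] ũ` on `0, …, N - 1`, where
`ũ` is `u` extended by zero to `ℤ`. Since `Δ_[-1] f k = f (k - 1) - f k`, the cumulative
sum `C` undoes `-Δ_[-1]` on sequences vanishing at negative indices (the sum telescopes).
Hence `C^m Dᵀ D b = (-1)^m ũ` for `u = D b`.
-/

open Finset Matrix fwdDiff

variable {R : Type*} [Ring R]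

def zeroExtend {n : ℕ} (v : Fin n → R) (k : ℤ) : R :=
  if h : 0 ≤ k ∧ k < n then v ⟨k.toNat, by omega⟩ else 0

lemma zeroExtend_natCast {n : ℕ} (v : Fin n → R) (k : ℕ) (hk : k < n) :
    zeroExtend v k = v ⟨k, hk⟩ := by
  simp [zeroExtend, hk]

lemma zeroExtend_eq_zero {n : ℕ} (v : Fin n → R) {k : ℤ} (hk : ¬(0 ≤ k ∧ k < n)) :
    zeroExtend v k = 0 :=
  dif_neg hk

def bandToeplitz (n N m : ℕ) (c : ℕ → R) : Matrix (Fin n) (Fin N) R :=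
  Matrix.of fun j l => if j.val ≤ l.val ∧ l.val ≤ j.val + m then c (l.val - j.val) else 0

def cumsumMatrix (N : ℕ) : Matrix (Fin N) (Fin N) R :=
  Matrix.of fun i j => if j.val ≤ i.val then 1 else 0

section BandToeplitz

variable {n N m : ℕ} (c : ℕ → R)

@[simp]
lemma bandToeplitz_apply (j : Fin n) (l : Fin N) :
    bandToeplitz n N m c j l
      = if j.val ≤ l.val ∧ l.val ≤ j.val + m then c (l.val - j.val) else 0 :=
  rfl

lemma bandToeplitz_mulVec_apply (b : Fin N → R) (j : Fin n) (hj : j.val + m < N) :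
    (bandToeplitz n N m c *ᵥ b) j = ∑ k : Fin (m + 1), c k * b ⟨j + k, by omega⟩ := by
  simp only [mulVec, dotProduct, bandToeplitz_apply]
  symm
  refine sum_of_injOn (fun k : Fin (m + 1) => (⟨j + k, by omega⟩ : Fin N)) ?_ ?_ ?_ ?_
  · intro k _ k' _ h
    simp only [Fin.mk.injEq] at h
    exact Fin.ext (by omega)
  · intro k _
    simp
  · intro l _ hl
    rw [if_neg, zero_mul]
    rintro ⟨h₁, h₂⟩
    exact hl ⟨⟨l - j, by omega⟩, by simp, Fin.ext (by simp; omega)⟩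
  · intro k _
    rw [if_pos (by simp; omega)]
    simp

lemma bandToeplitz_transpose_mulVec_apply (u : Fin n → R) (l : Fin N) :
    ((bandToeplitz n N m c)ᵀ *ᵥ u) l = ∑ k ∈ range (m + 1), c k * zeroExtend u (l - k) := by
  simp only [mulVec, dotProduct, transpose_apply]
  have band (j : Fin n) (h : bandToeplitz n N m c j l * u j ≠ 0) :
      j.val ≤ l.val ∧ l.val ≤ j.val + m := by
    by_contra hc
    simp [hc] at h
  refine sum_bij_ne_zero (fun j _ _ => l.val - j.val) ?_ ?_ ?_ ?_
  · intro j _ h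
    have := band j h
    simp only [mem_range]
    omega
  · intro j _ h j' _ h' _
    have := band j h
    have := band j' h'
    exact Fin.ext (by omega)
  · intro k hk h
    simp only [mem_range] at hk
    have hkl : k ≤ l.val ∧ l.val - k < n := by
      by_contra hc
      exact h (by rw [zeroExtend_eq_zero _ (by omega), mul_zero])
    rw [show (l.val : ℤ) - k = (l.val - k : ℕ) by omega, zeroExtend_natCast _ _ hkl.2] at h
    refine ⟨⟨l.val - k, hkl.2⟩, mem_univ _, ?_, by simp; omega⟩
    rwa [bandToeplitz_apply, if_pos (by simp; omega), show l.val - (l.val - k) = k by omega]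
  · intro j _ h
    have hjl := band j h
    rw [bandToeplitz_apply, if_pos hjl, show (l.val : ℤ) - (l.val - j.val : ℕ) = j.val by omega,
      zeroExtend_natCast _ _ j.isLt]

end BandToeplitz

lemma fwdDiff_neg_one_iter_eq_sum (f : ℤ → R) (m : ℕ) (l : ℤ) :
    (Δ_[-1])^[m] f l = ∑ k ∈ range (m + 1), (-1) ^ (m - k) * m.choose k * f (l - k) := by
  rw [fwdDiff_iter_eq_sum_shift]
  refine sum_congr rfl fun k _ => ?_
  rw [smul_neg, nsmul_one, ← sub_eq_add_neg, zsmul_eq_mul]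
  push_cast
  rfl

lemma fwdDiff_neg_one_iter_eq_zero_of_neg {f : ℤ → R} (hf : ∀ k < 0, f k = 0) (r : ℕ) :
    ∀ k < 0, (Δ_[-1])^[r] f k = 0 := by
  induction r with
  | zero => exact hf
  | succ r ih =>
    intro k hk
    rw [Function.iterate_succ_apply', fwdDiff, ih k hk, ih (k + -1) (by omega), sub_zero]

section CumsumMatrix

variable {N : ℕ} {f : ℤ → R}

lemma sum_range_fwdDiff_neg_one (hf : ∀ k < 0, f k = 0) (n : ℕ) :
    ∑ j ∈ range n, Δ_[-1] f j = -f (n - 1) := by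
  induction n with
  | zero => simp [hf]
  | succ n ih =>
    rw [sum_range_succ, ih, fwdDiff, ← sub_eq_add_neg]
    push_cast
    rw [add_sub_cancel_right]
    abel

lemma cumsumMatrix_mulVec_fwdDiff_neg_one (hf : ∀ k < 0, f k = 0) :
    cumsumMatrix N *ᵥ (fun j : Fin N => Δ_[-1] f j) = -fun i : Fin N => f i := by
  ext i
  calc (cumsumMatrix N *ᵥ fun j : Fin N => Δ_[-1] f j) i
      = ∑ j ∈ range N, if j ≤ i.val then Δ_[-1] f j else 0 := by
        simp only [mulVec, dotProduct, cumsumMatrix, of_apply, ite_mul, one_mul, zero_mul]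
        exact Fin.sum_univ_eq_sum_range (fun j => if j ≤ i.val then Δ_[-1] f j else 0) N
    _ = ∑ j ∈ range (i.val + 1), Δ_[-1] f j := by
        rw [← sum_filter]
        congr 1
        ext j
        simp only [mem_filter, mem_range]
        omega
    _ = -f i := by
        rw [sum_range_fwdDiff_neg_one hf]
        push_cast
        rw [add_sub_cancel_right]

lemma cumsumMatrix_pow_mulVec_fwdDiff_neg_one_iter (hf : ∀ k < 0, f k = 0) (r : ℕ) :
    cumsumMatrix N ^ r *ᵥ (fun j : Fin N => (Δ_[-1])^[r] f j)
      = (-1 : R) ^ r • fun i : Fin N => f i := by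
  induction r with
  | zero => simp
  | succ r ih =>
    simp only [pow_succ, ← mulVec_mulVec, Function.iterate_succ_apply',
      cumsumMatrix_mulVec_fwdDiff_neg_one (fwdDiff_neg_one_iter_eq_zero_of_neg hf r),
      mulVec_neg, ih, mul_neg_one, neg_smul]

end CumsumMatrix

/-- Identity (equ:dd) of Section 2: `C^m D_m^T D_m b` equals
`(−1)^m (Δ^m b_{m+1}, …, Δ^m b_N, 0, …, 0)^T`, where
`Δ^m b_k = Σ_{j=0}^m (−1)^{m−j} C(m,j) b_{k−m+j}`. -/
theorem stmt_14 (m N : ℕ)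
    (D : Matrix (Fin (N - m)) (Fin N) ℝ)
    (hD : ∀ (j : Fin (N - m)) (l : Fin N), D j l =
      if j.val ≤ l.val ∧ l.val ≤ j.val + m
      then (-1 : ℝ) ^ (m - (l.val - j.val)) * (Nat.choose m (l.val - j.val) : ℝ)
      else 0)
    (C : Matrix (Fin N) (Fin N) ℝ)
    (hC : ∀ i j : Fin N, C i j = if j.val ≤ i.val then (1 : ℝ) else 0)
    (b : Fin N → ℝ) :
    (∀ (i : Fin N) (_hi : i.val + 1 ≤ N - m),
      ((C ^ m * D.transpose * D).mulVec b) i =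
        (-1 : ℝ) ^ m * ∑ j : Fin (m + 1),
          (-1 : ℝ) ^ (m - j.val) * (Nat.choose m j.val : ℝ) *
            b ⟨i.val + j.val, by have := j.isLt; omega⟩) ∧
    (∀ i : Fin N, N - m < i.val + 1 → ((C ^ m * D.transpose * D).mulVec b) i = 0) := by
  set c : ℕ → ℝ := fun k => (-1) ^ (m - k) * m.choose k
  have hD' : D = bandToeplitz (N - m) N m c := Matrix.ext hD
  have hC' : C = cumsumMatrix N := Matrix.ext hC
  set u := D *ᵥ b with hu
  have hDT : Dᵀ *ᵥ u = fun l : Fin N => (Δ_[-1])^[m] (zeroExtend u) l := by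
    ext l
    rw [hD', bandToeplitz_transpose_mulVec_apply, fwdDiff_neg_one_iter_eq_sum]
  have key : (C ^ m * Dᵀ * D) *ᵥ b = (-1 : ℝ) ^ m • fun i : Fin N => zeroExtend u i := by
    rw [← mulVec_mulVec, ← mulVec_mulVec, hDT, hC',
      cumsumMatrix_pow_mulVec_fwdDiff_neg_one_iter fun k hk => zeroExtend_eq_zero u (by omega)]
  refine ⟨fun i hi => ?_, fun i hi => ?_⟩
  · rw [key, Pi.smul_apply, smul_eq_mul, zeroExtend_natCast u i (by omega), hu, hD',
      bandToeplitz_mulVec_apply c b _ (by dsimp only; omega)]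
  · rw [key, Pi.smul_apply, zeroExtend_eq_zero u (by omega), smul_zero]
end

section
/- Define K : ℝ → ℝ by K(t) = (1/(2√2)) e^{−|t|/√2} ( cos(|t|/√2) + sin(|t|/√2) ). Then ∫_{−∞}^{∞} K(t) dt = 1 and ∫_{−∞}^{∞} t^k K(t) dt = 0 for k = 1, 2, 3; that is, K is a kernel of order 4. -/
/-!
With `φ u = e^{-u} (cos u + sin u)` we have `K t = φ (|t| / √2) / (2√2)`. Since `K` is even its
odd moments vanish, and the substitution `u = |t| / √2` reduces the zeroth and second moments to
`∫₀^∞ φ = 1` and `∫₀^∞ u² φ = 0`. Both follow from the fundamental theorem of calculus on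
`(0, ∞)` with the antiderivatives `-e^{-u} cos u` and `e^{-u} ((-u² - u) cos u + (u + 1) sin u)`:
these are integrable together with their derivatives, hence tend to `0` at infinity.
-/

open Real Filter MeasureTheory Set Topology

theorem Function.Odd.integral_eq_zero {G E : Type*} [MeasurableSpace G] [AddGroup G]
    [MeasurableNeg G] [NormedAddCommGroup E] [NormedSpace ℝ E] {μ : Measure G} [μ.IsNegInvariant]
    {f : G → E} (hf : f.Odd) : ∫ x, f x ∂μ = 0 := by
  have h := integral_neg_eq_self f μ
  simp only [hf.eq, integral_neg, neg_eq_iff_add_eq_zero] at h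
  simpa [← two_smul ℝ] using h

theorem integral_comp_abs_div {f : ℝ → ℝ} {s : ℝ} (hs : 0 < s) :
    ∫ t, f (|t| / s) = 2 * s * ∫ u in Ioi 0, f u := by
  have h := Measure.integral_comp_div (fun t => f |t|) s
  simp only [abs_div, abs_of_pos hs] at h
  rw [h, integral_comp_abs, smul_eq_mul]
  ring

theorem integral_Ioi_eq_neg_of_hasDerivAt_of_integrableOn {E : Type*} [NormedAddCommGroup E]
    [NormedSpace ℝ E] [CompleteSpace E] {f f' : ℝ → E} {a : ℝ}
    (hderiv : ∀ x ∈ Ici a, HasDerivAt f (f' x) x) (hf' : IntegrableOn f' (Ioi a))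
    (hf : IntegrableOn f (Ioi a)) : ∫ x in Ioi a, f' x = -f a := by
  simpa using integral_Ioi_of_hasDerivAt_of_tendsto' hderiv hf'
    (tendsto_zero_of_hasDerivAt_of_integrableOn_Ioi (fun x hx => hderiv x hx.out.le) hf' hf)

theorem integrableOn_pow_mul_exp_neg_Ioi (n : ℕ) :
    IntegrableOn (fun u : ℝ => u ^ n * exp (-u)) (Ioi 0) := by
  refine (GammaIntegral_convergent (s := n + 1) (by positivity)).congr_fun (fun u _ => ?_)
    measurableSet_Ioi
  simp [mul_comm]

theorem integrableOn_pow_mul_exp_neg_mul_Ioi (n : ℕ) {f : ℝ → ℝ} (hf : Continuous f)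
    (hbdd : ∀ u, |f u| ≤ 1) :
    IntegrableOn (fun u : ℝ => u ^ n * exp (-u) * f u) (Ioi 0) :=
  (integrableOn_pow_mul_exp_neg_Ioi n).mul_bdd hf.aestronglyMeasurable
    (Eventually.of_forall hbdd)

theorem integrableOn_pow_mul_exp_neg_mul_cos_Ioi (n : ℕ) :
    IntegrableOn (fun u : ℝ => u ^ n * exp (-u) * cos u) (Ioi 0) :=
  integrableOn_pow_mul_exp_neg_mul_Ioi n continuous_cos abs_cos_le_one

theorem integrableOn_pow_mul_exp_neg_mul_sin_Ioi (n : ℕ) :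
    IntegrableOn (fun u : ℝ => u ^ n * exp (-u) * sin u) (Ioi 0) :=
  integrableOn_pow_mul_exp_neg_mul_Ioi n continuous_sin abs_sin_le_one

noncomputable def dampedCosAddSin (u : ℝ) : ℝ := exp (-u) * (cos u + sin u)

theorem integrableOn_pow_mul_dampedCosAddSin_Ioi (n : ℕ) :
    IntegrableOn (fun u => u ^ n * dampedCosAddSin u) (Ioi 0) :=
  ((integrableOn_pow_mul_exp_neg_mul_cos_Ioi n).add
    (integrableOn_pow_mul_exp_neg_mul_sin_Ioi n)).congr_fun
    (fun u _ => by simp only [dampedCosAddSin, Pi.add_apply]; ring) measurableSet_Ioi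

theorem integral_dampedCosAddSin_Ioi : ∫ u in Ioi 0, dampedCosAddSin u = 1 := by
  have hderiv (u : ℝ) : HasDerivAt (fun u => -(exp (-u) * cos u)) (dampedCosAddSin u) u := by
    refine ((hasDerivAt_neg u).exp.mul (hasDerivAt_cos u)).neg.congr_deriv ?_
    simp only [dampedCosAddSin]
    ring
  have hint : IntegrableOn (fun u => -(exp (-u) * cos u)) (Ioi 0) :=
    (integrableOn_pow_mul_exp_neg_mul_cos_Ioi 0).neg.congr_fun (fun u _ => by simp)
      measurableSet_Ioi
  simpa using integral_Ioi_eq_neg_of_hasDerivAt_of_integrableOn (fun u _ => hderiv u)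
    (by simpa using integrableOn_pow_mul_dampedCosAddSin_Ioi 0) hint

theorem integral_sq_mul_dampedCosAddSin_Ioi : ∫ u in Ioi 0, u ^ 2 * dampedCosAddSin u = 0 := by
  set F : ℝ → ℝ := fun u => exp (-u) * ((-u ^ 2 - u) * cos u + (u + 1) * sin u)
  have hderiv (u : ℝ) : HasDerivAt F (u ^ 2 * dampedCosAddSin u) u := by
    refine ((hasDerivAt_neg u).exp.mul
      ((((hasDerivAt_pow 2 u).neg.sub (hasDerivAt_id u)).mul (hasDerivAt_cos u)).add
        (((hasDerivAt_id u).add_const 1).mul (hasDerivAt_sin u)))).congr_deriv ?_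
    simp only [dampedCosAddSin, Pi.add_apply, Pi.sub_apply, Pi.mul_apply, Pi.neg_apply, id]
    ring
  have hint : IntegrableOn F (Ioi 0) :=
    ((((integrableOn_pow_mul_exp_neg_mul_cos_Ioi 2).add
      (integrableOn_pow_mul_exp_neg_mul_cos_Ioi 1)).neg.add
      (integrableOn_pow_mul_exp_neg_mul_sin_Ioi 1)).add
      (integrableOn_pow_mul_exp_neg_mul_sin_Ioi 0)).congr_fun
      (fun u _ => by simp only [F, Pi.add_apply, Pi.neg_apply]; ring) measurableSet_Ioi
  simpa [F] using integral_Ioi_eq_neg_of_hasDerivAt_of_integrableOn (fun u _ => hderiv u)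
    (integrableOn_pow_mul_dampedCosAddSin_Ioi 2) hint

/-- Example 1, `m = 2`: the equivalent kernel
`K(t) = (1/(2√2)) e^{−|t|/√2} (cos(|t|/√2) + sin(|t|/√2))` is a kernel of order 4. -/
theorem stmt_15 (K : ℝ → ℝ)
    (hK : ∀ t : ℝ, K t = 1 / (2 * Real.sqrt 2) * Real.exp (-|t| / Real.sqrt 2) *
      (Real.cos (|t| / Real.sqrt 2) + Real.sin (|t| / Real.sqrt 2))) :
    (∫ t : ℝ, K t) = 1 ∧ ∀ k : ℕ, 1 ≤ k → k ≤ 3 → (∫ t : ℝ, t ^ k * K t) = 0 := by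
  have hs : 0 < √2 := by positivity
  have hK' (t : ℝ) : K t = 1 / (2 * √2) * dampedCosAddSin (|t| / √2) := by
    rw [hK, dampedCosAddSin, neg_div, mul_assoc]
  have hodd_moment (k : ℕ) (hk : Odd k) : (fun t : ℝ => t ^ k * K t).Odd := fun t => by
    simp only [hK', abs_neg, hk.neg_pow, neg_mul]
  have hsq_moment (t : ℝ) :
      t ^ 2 * K t = 1 / √2 * ((|t| / √2) ^ 2 * dampedCosAddSin (|t| / √2)) := by
    rw [hK', div_pow, sq_abs, sq_sqrt zero_le_two]
    field_simp
  refine ⟨?_, fun k hk1 hk3 => ?_⟩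
  · simp_rw [hK']
    rw [integral_const_mul, integral_comp_abs_div hs, integral_dampedCosAddSin_Ioi]
    field_simp
  · interval_cases k
    · exact (hodd_moment 1 odd_one).integral_eq_zero
    · simp_rw [hsq_moment]
      rw [integral_const_mul, integral_comp_abs_div (f := fun u => u ^ 2 * dampedCosAddSin u) hs,
        integral_sq_mul_dampedCosAddSin_Ioi]
      simp
    · exact (hodd_moment 3 (by decide)).integral_eq_zero
end

section
/- Let β > 0. Define q(t) = e^{−βt/√2} ( sin(βt/√2), −cos(βt/√2) )^T ∈ ℝ², r(s) = (β/(2√2)) e^{−βs/√2} ( −sin(βs/√2) + cos(βs/√2), √2 cos(βs/√2) )^T ∈ ℝ², and the matrix B = [[1, 0], [1, √2]]. Then for all t, s ≥ 0: q(t)^T (−B) r(s) = (β/(2√2)) e^{−β(t+s)/√2} [ cos(β(t−s)/√2) + 2 cos(βt/√2) cos(βs/√2) − sin(β(t+s)/√2) ]. Consequently, with L(u) = (β/(2√2)) e^{−βu/√2} ( cos(βu/√2) + sin(βu/√2) ) for u ≥ 0, the boundary kernel K_b(t,s) = L(|t−s|) + q(t)^T(−B)r(s) satisfies K_b(0,s)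 = √2 β e^{−βs/√2} cos(βs/√2) for all s ≥ 0. -/
/-!
With `a = βt/√2` and `b = βs/√2`, the boundary term `q(t)ᵀ(−B)r(s)` is a product of the
exponentials `e^{−a} e^{−b}` and a trigonometric polynomial in `a, b`, which the addition
formulas turn into the stated closed form. At `t = 0` it contributes
`(β/(2√2)) e^{−b} (3 cos b − sin b)`, and adding `L(s) = (β/(2√2)) e^{−b} (cos b + sin b)`
leaves `(4β/(2√2)) e^{−b} cos b = √2 β e^{−b} cos b`.
-/

open Matrix Real

lemma dotProduct_neg_boundaryMatrix_mulVec (c a b : ℝ) :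
    ![exp (-a) * sin a, exp (-a) * (-cos a)] ⬝ᵥ (-!![1, 0; 1, √2]) *ᵥ
        ![c * exp (-b) * (-sin b + cos b), c * exp (-b) * (√2 * cos b)] =
      c * exp (-(a + b)) * (cos (a - b) + 2 * cos a * cos b - sin (a + b)) := by
  have hsqrt : √2 ^ 2 = 2 := sq_sqrt zero_le_two
  rw [cos_sub, sin_add, neg_add, exp_add]
  simp only [dotProduct, mulVec, Matrix.neg_apply, of_apply, cons_val', cons_val_fin_one,
    Fin.sum_univ_two, cons_val_zero, cons_val_one]
  linear_combination exp (-a) * exp (-b) * c * cos a * cos b * hsqrt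

lemma four_mul_div_two_mul_sqrt_two (x : ℝ) : 4 * (x / (2 * √2)) = √2 * x := by
  have hsqrt : √2 ^ 2 = 2 := sq_sqrt zero_le_two
  field_simp
  linear_combination -2 * x * hsqrt

theorem stmt_18_general (β : ℝ)
    (q r : ℝ → Fin 2 → ℝ)
    (hq : ∀ t : ℝ, q t =
      ![Real.exp (-(β * t / Real.sqrt 2)) * Real.sin (β * t / Real.sqrt 2),
        Real.exp (-(β * t / Real.sqrt 2)) * (-Real.cos (β * t / Real.sqrt 2))])
    (hr : ∀ s : ℝ, r s =
      ![β / (2 * Real.sqrt 2) * Real.exp (-(β * s / Real.sqrt 2)) *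
          (-Real.sin (β * s / Real.sqrt 2) + Real.cos (β * s / Real.sqrt 2)),
        β / (2 * Real.sqrt 2) * Real.exp (-(β * s / Real.sqrt 2)) *
          (Real.sqrt 2 * Real.cos (β * s / Real.sqrt 2))])
    (B : Matrix (Fin 2) (Fin 2) ℝ) (hB : B = !![1, 0; 1, Real.sqrt 2])
    (L : ℝ → ℝ)
    (hL : ∀ u : ℝ, L u = β / (2 * Real.sqrt 2) * Real.exp (-(β * u / Real.sqrt 2)) *
      (Real.cos (β * u / Real.sqrt 2) + Real.sin (β * u / Real.sqrt 2)))
    (Kb : ℝ → ℝ → ℝ)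
    (hKb : ∀ t s : ℝ, Kb t s = L |t - s| + q t ⬝ᵥ (-B).mulVec (r s)) :
    (∀ t s : ℝ, 0 ≤ t → 0 ≤ s →
      q t ⬝ᵥ (-B).mulVec (r s) =
        β / (2 * Real.sqrt 2) * Real.exp (-(β * (t + s) / Real.sqrt 2)) *
          (Real.cos (β * (t - s) / Real.sqrt 2) +
            2 * Real.cos (β * t / Real.sqrt 2) * Real.cos (β * s / Real.sqrt 2) -
            Real.sin (β * (t + s) / Real.sqrt 2))) ∧
    (∀ s : ℝ, 0 ≤ s →
      Kb 0 s = Real.sqrt 2 * β * Real.exp (-(β * s / Real.sqrt 2)) *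
        Real.cos (β * s / Real.sqrt 2)) := by
  have hboundary : ∀ t s : ℝ, q t ⬝ᵥ (-B).mulVec (r s) =
      β / (2 * √2) * exp (-(β * (t + s) / √2)) *
        (cos (β * (t - s) / √2) + 2 * cos (β * t / √2) * cos (β * s / √2) -
          sin (β * (t + s) / √2)) := by
    intro t s
    rw [hq, hr, hB, show β * (t + s) / √2 = β * t / √2 + β * s / √2 by ring,
      show β * (t - s) / √2 = β * t / √2 - β * s / √2 by ring]
    exact dotProduct_neg_boundaryMatrix_mulVec _ _ _
  refine ⟨fun t s _ _ => hboundary t s, fun s hs => ?_⟩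
  rw [hKb, hboundary, hL, zero_sub, abs_neg, abs_of_nonneg hs]
  simp only [zero_add, mul_zero, zero_div, cos_zero, mul_neg, neg_div, cos_neg]
  linear_combination exp (-(β * s / √2)) * cos (β * s / √2) * four_mul_div_two_mul_sqrt_two β

/-- Example 2 (Section 5), the `m = 2` boundary-kernel computation: with
`q(t) = e^{−βt/√2}(sin(βt/√2), −cos(βt/√2))`,
`r(s) = (β/(2√2)) e^{−βs/√2}(−sin(βs/√2)+cos(βs/√2), √2 cos(βs/√2))` and
`B = [[1,0],[1,√2]]`, one has the stated closed form for `q(t)^T(−B)r(s)`, and the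
boundary kernel `K_b(t,s) = L(|t−s|) + q(t)^T(−B)r(s)` satisfies
`K_b(0,s) = √2 β e^{−βs/√2} cos(βs/√2)`. -/
theorem stmt_18 (β : ℝ) (hβ : 0 < β)
    (q r : ℝ → Fin 2 → ℝ)
    (hq : ∀ t : ℝ, q t =
      ![Real.exp (-(β * t / Real.sqrt 2)) * Real.sin (β * t / Real.sqrt 2),
        Real.exp (-(β * t / Real.sqrt 2)) * (-Real.cos (β * t / Real.sqrt 2))])
    (hr : ∀ s : ℝ, r s =
      ![β / (2 * Real.sqrt 2) * Real.exp (-(β * s / Real.sqrt 2)) *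
          (-Real.sin (β * s / Real.sqrt 2) + Real.cos (β * s / Real.sqrt 2)),
        β / (2 * Real.sqrt 2) * Real.exp (-(β * s / Real.sqrt 2)) *
          (Real.sqrt 2 * Real.cos (β * s / Real.sqrt 2))])
    (B : Matrix (Fin 2) (Fin 2) ℝ) (hB : B = !![1, 0; 1, Real.sqrt 2])
    (L : ℝ → ℝ)
    (hL : ∀ u : ℝ, L u = β / (2 * Real.sqrt 2) * Real.exp (-(β * u / Real.sqrt 2)) *
      (Real.cos (β * u / Real.sqrt 2) + Real.sin (β * u / Real.sqrt 2)))
    (Kb : ℝ → ℝ → ℝ)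
    (hKb : ∀ t s : ℝ, Kb t s = L |t - s| + q t ⬝ᵥ (-B).mulVec (r s)) :
    (∀ t s : ℝ, 0 ≤ t → 0 ≤ s →
      q t ⬝ᵥ (-B).mulVec (r s) =
        β / (2 * Real.sqrt 2) * Real.exp (-(β * (t + s) / Real.sqrt 2)) *
          (Real.cos (β * (t - s) / Real.sqrt 2) +
            2 * Real.cos (β * t / Real.sqrt 2) * Real.cos (β * s / Real.sqrt 2) -
            Real.sin (β * (t + s) / Real.sqrt 2))) ∧
    (∀ s : ℝ, 0 ≤ s →
      Kb 0 s = Real.sqrt 2 * β * Real.exp (-(β * s / Real.sqrt 2)) *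
        Real.cos (β * s / Real.sqrt 2)) :=
  stmt_18_general β q r hq hr B hB L hL Kb hKb
end
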